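/- arXiv:2010.07682 — 12 statements merged into one kernel-verified Lean document; each statement's English description precedes it below -/
import Mathlib

section
/- Zolotarev's lemma: Let k be a finite field of odd cardinality q and let a be a nonzero element of k. Then the sign of the permutation of k given by x ↦ a·x, viewed as an integer ±1 and then cast into k, equals a^((q−1)/2). Equivalently, this permutation is even if and only if a is a square in k. -/
/-!
A generator `g` of the cyclic group `kˣ` acts on `k` as a single cycle of even length `q - 1`
(it fixes only `0`), so multiplication by `g` is odd; and `g ^ (q / 2) = -1` because `g` has
order `q - 1`. Writing `a = g ^ n`, both the sign of `x ↦ a * x` and `a ^ (q / 2)` are `(-1) ^ n`.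
Euler's criterion then turns the first statement into the second.
-/

open Equiv Equiv.Perm

section

variable {k : Type*} [Field k]

theorem units_smul_eq_self_iff_eq_zero {g : kˣ} (hg : g ≠ 1) (x : k) : g • x = x ↔ x = 0 := by
  refine ⟨fun h ↦ by_contra fun hx ↦ hg (Units.ext ?_), fun h ↦ by simp [h]⟩
  exact mul_right_cancel₀ hx (by simpa [Units.smul_def] using h)

theorem isCycle_toPerm_of_forall_mem_zpowers {g : kˣ} (hg : ∀ x, x ∈ Subgroup.zpowers g)
    (hg1 : g ≠ 1) : (MulAction.toPerm g : Perm k).IsCycle := by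
  refine ⟨1, by simp [units_smul_eq_self_iff_eq_zero hg1], fun y hy ↦ ?_⟩
  have hy0 : y ≠ 0 := mt (units_smul_eq_self_iff_eq_zero hg1 y).mpr hy
  obtain ⟨i, hi : g ^ i = Units.mk0 y hy0⟩ := hg (Units.mk0 y hy0)
  refine ⟨i, ?_⟩
  change (MulAction.toPermHom kˣ k g ^ i) 1 = y
  rw [← map_zpow, hi]
  simp [Units.smul_def]

namespace FiniteField

variable [Fintype k]

theorem units_generator_pow_card_div_two (hF : ringChar k ≠ 2) {g : kˣ}
    (hg : ∀ x, x ∈ Subgroup.zpowers g) : (g : k) ^ (Fintype.card k / 2) = -1 := by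
  have hodd := odd_card_of_char_ne_two hF
  have horder : orderOf g = Fintype.card k - 1 := by
    rw [orderOf_eq_card_of_forall_mem_zpowers hg, Nat.card_units, Nat.card_eq_fintype_card]
  have htwo : 1 < Fintype.card k := Fintype.one_lt_card
  have hne : g ^ (Fintype.card k / 2) ≠ 1 := pow_ne_one_of_lt_orderOf (by omega) (by omega)
  refine (pow_dichotomy hF g.ne_zero).resolve_left fun h ↦ hne ?_
  exact Units.ext (by rwa [Units.val_pow_eq_pow_val])

theorem units_generator_ne_one (hF : ringChar k ≠ 2) {g : kˣ}
    (hg : ∀ x, x ∈ Subgroup.zpowers g) : g ≠ 1 := by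
  rintro rfl
  have h := units_generator_pow_card_div_two hF hg
  rw [Units.val_one, one_pow] at h
  exact Ring.neg_one_ne_one_of_char_ne_two hF h.symm

theorem sign_toPerm_units_generator [DecidableEq k] (hF : ringChar k ≠ 2) {g : kˣ}
    (hg : ∀ x, x ∈ Subgroup.zpowers g) : sign (MulAction.toPerm g : Perm k) = -1 := by
  have hg1 := units_generator_ne_one hF hg
  have hsupport : (MulAction.toPerm g : Perm k).support = {0}ᶜ := by
    ext x
    simp [units_smul_eq_self_iff_eq_zero hg1]
  have heven : Even (Fintype.card k - 1) := by
    have := odd_card_of_char_ne_two hF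
    exact ⟨Fintype.card k / 2, by omega⟩
  rw [(isCycle_toPerm_of_forall_mem_zpowers hg hg1).sign, hsupport, Finset.card_compl,
    Finset.card_singleton, heven.neg_one_pow]

theorem cast_sign_toPerm_units [DecidableEq k] (hF : ringChar k ≠ 2) (u : kˣ) :
    ((sign (MulAction.toPerm u : Perm k) : ℤ) : k) = (u : k) ^ (Fintype.card k / 2) := by
  obtain ⟨g, hg⟩ := IsCyclic.exists_generator (α := kˣ)
  obtain ⟨n, rfl⟩ : u ∈ Submonoid.powers g := (mem_powers_iff_mem_zpowers).mpr (hg u)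
  change ((sign (MulAction.toPermHom kˣ k (g ^ n)) : ℤ) : k) = ((g ^ n : kˣ) : k) ^ _
  rw [map_pow, map_pow, MulAction.toPermHom_apply, sign_toPerm_units_generator hF hg,
    Units.val_pow_eq_pow_val g, ← pow_mul, mul_comm, pow_mul,
    units_generator_pow_card_div_two hF hg]
  simp

end FiniteField

end

/-- Zolotarev's lemma: for a finite field `k` of odd cardinality `q` and a
nonzero `a : k`, the sign of the permutation `x ↦ a * x` of `k`, cast into `k`, equals
`a ^ ((q - 1) / 2)`; equivalently, this permutation is even iff `a` is a square. -/
theorem zolotarev {k : Type*} [Field k] [Fintype k] [DecidableEq k]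
    (hodd : Odd (Fintype.card k)) (a : k) (ha : a ≠ 0) :
    ((Equiv.Perm.sign (Equiv.mulLeft₀ a ha) : ℤ) : k) = a ^ ((Fintype.card k - 1) / 2) ∧
      (Equiv.Perm.sign (Equiv.mulLeft₀ a ha) = 1 ↔ IsSquare a) := by
  have hF : ringChar k ≠ 2 := fun h ↦
    Nat.not_even_iff_odd.mpr hodd (Nat.even_iff.mpr (FiniteField.even_card_iff_char_two.mp h))
  have hhalf : (Fintype.card k - 1) / 2 = Fintype.card k / 2 := by
    obtain ⟨t, ht⟩ := hodd
    omega
  have key : ((sign (Equiv.mulLeft₀ a ha) : ℤ) : k) = a ^ (Fintype.card k / 2) :=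
    FiniteField.cast_sign_toPerm_units hF (Units.mk0 a ha)
  refine ⟨hhalf ▸ key, ?_⟩
  rw [FiniteField.isSquare_iff hF ha, ← key]
  rcases Int.units_eq_one_or (sign (Equiv.mulLeft₀ a ha)) with h | h <;>
    simp [h, Ring.neg_one_ne_one_of_char_ne_two hF]
end

section
/- Let k be a finite field of odd cardinality q, let r ≥ 1, and let M be an invertible r × r matrix over k. Then the sign of the permutation of k^r given by v ↦ M·v, viewed as an integer ±1 and then cast into k, equals (det M)^((q−1)/2). -/
/-!
Both `A ↦ sign (v ↦ A v)` and `A ↦ χ (det A)`, with `χ` the quadratic character of `k`, are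
homomorphisms `GL_r(k) → ℤˣ`, and `GL_r(k)` is generated by invertible diagonal matrices and
transvections, so it suffices to compare them there. A transvection `T` satisfies `T ^ q = 1`
with `q` odd, so its sign is `1 = χ 1`. A diagonal matrix is a product of matrices scaling one
coordinate by some `u`; on `k^r = k × k^(r-1)` such a matrix acts as `q ^ (r - 1)` (an odd
number of) copies of multiplication by `u` on `k`, which has the sign of multiplication by `u` on
`kˣ`. For a generator `g` of the cyclic group `kˣ` the latter is a single cycle of even length
`q - 1`, so its sign is `-1 = χ g`, as `g` is not a square.
-/

open Equiv Equiv.Perm Matrix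

theorem Int.units_pow_of_odd (u : ℤˣ) {m : ℕ} (hm : Odd m) : u ^ m = u := by
  rcases Int.units_eq_one_or u with rfl | rfl
  · exact one_pow m
  · exact hm.neg_one_pow

namespace Equiv.Perm

theorem sign_mulLeft_of_forall_mem_zpowers {G : Type*} [Group G] [Fintype G] [DecidableEq G]
    {g : G} (hg : ∀ x, x ∈ Subgroup.zpowers g) (hg1 : g ≠ 1) :
    sign (Equiv.mulLeft g) = -(-1) ^ Fintype.card G := by
  have hmoves : ∀ x, Equiv.mulLeft g x ≠ x := fun x => by simpa using hg1
  have hcycle : (Equiv.mulLeft g).IsCycle := by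
    refine ⟨1, hmoves 1, fun y _ => ?_⟩
    obtain ⟨n, rfl⟩ := Subgroup.mem_zpowers_iff.mp (hg y)
    exact ⟨n, by simp [zpow_mulLeft]⟩
  have hsupport : (Equiv.mulLeft g).support = Finset.univ :=
    Finset.eq_univ_of_forall fun x => mem_support.mpr (hmoves x)
  rw [hcycle.sign, hsupport, Finset.card_univ]

theorem sign_units_mulLeft {G₀ : Type*} [GroupWithZero G₀] [Fintype G₀] [DecidableEq G₀]
    (u : G₀ˣ) : sign (Units.mulLeft u) = sign (Equiv.mulLeft u) := by
  have : Units.mulLeft u = (Equiv.mulLeft u).extendDomain (unitsEquivNeZero (G₀ := G₀)) := by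
    ext x
    by_cases hx : x = 0
    · rw [extendDomain_apply_not_subtype _ _ (by simpa using hx)]
      simp [hx]
    · rw [extendDomain_apply_subtype (Equiv.mulLeft u) unitsEquivNeZero hx]
      simp
  rw [this, sign_extendDomain]

end Equiv.Perm

theorem FiniteField.sign_mulLeft_eq_quadraticChar {K : Type*} [Field K] [Fintype K]
    [DecidableEq K] (hK : ringChar K ≠ 2) (u : Kˣ) :
    sign (Equiv.mulLeft u) = (quadraticChar K).toUnitHom u := by
  obtain ⟨g, hg⟩ := IsCyclic.exists_generator (α := Kˣ)
  have hodd := FiniteField.odd_card_of_char_ne_two hK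
  have hcard := Fintype.one_lt_card (α := K)
  have horder : orderOf g = Fintype.card K - 1 := by
    rw [orderOf_eq_card_of_forall_mem_zpowers hg, Nat.card_eq_fintype_card, Fintype.card_units]
  have hchar : quadraticChar K g = -1 := by
    have : g ^ (Fintype.card K / 2) ≠ 1 := pow_ne_one_of_lt_orderOf (by omega) (by omega)
    rw [quadraticChar_eq_pow_of_char_ne_two hK g.ne_zero, if_neg (by rwa [← Units.val_pow_eq_pow_val, Units.val_eq_one])]
  have hsign : sign (Equiv.mulLeft g) = -1 := by
    have hg1 : g ≠ 1 := by rintro rfl; simp at hchar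
    rw [sign_mulLeft_of_forall_mem_zpowers hg hg1, Fintype.card_units,
      (Nat.even_iff.mpr (by omega)).neg_one_pow]
  refine DFunLike.congr_fun ((MonoidHom.eq_iff_eq_on_generator hg
    (sign.comp (MulAction.toPermHom Kˣ Kˣ)) (quadraticChar K).toUnitHom).mpr (Units.ext ?_)) u
  rw [MulChar.coe_toUnitHom, hchar]
  exact congrArg Units.val hsign

namespace Matrix

variable {n R : Type*} [Fintype n] [DecidableEq n] [CommRing R]

theorem transvection_pow {i j : n} (hij : i ≠ j) (c : R) (m : ℕ) :
    transvection i j c ^ m = transvection i j (m * c) := by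
  induction m with
  | zero => simp
  | succ m ih =>
    rw [pow_succ, ih, transvection_mul_transvection_same i j hij]
    push_cast
    ring_nf

namespace GeneralLinearGroup

def mulVecPerm : GL n R →* Perm (n → R) :=
  (MulAction.toPermHom (LinearMap.GeneralLinearGroup R (n → R)) (n → R)).comp toLin.toMonoidHom

@[simp]
theorem mulVecPerm_apply (A : GL n R) (v : n → R) : mulVecPerm A v = (A : Matrix n n R) *ᵥ v :=
  rfl

def diagonalUnits : (n → Rˣ) →* GL n R :=
  (Units.map (diagonalRingHom n R : (n → R) →* Matrix n n R)).comp
    MulEquiv.piUnits.symm.toMonoidHom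

@[simp]
theorem coe_diagonalUnits (u : n → Rˣ) :
    (diagonalUnits u : Matrix n n R) = diagonal fun i => (u i : R) :=
  rfl

theorem hom_ext_of_diagonalUnits_of_transvection {K G : Type*} [Field K] [Monoid G]
    {f g : GL n K →* G} (hdiag : f.comp diagonalUnits = g.comp diagonalUnits)
    (htrans : ∀ (t : TransvectionStruct n K) (A : GL n K), (A : Matrix n n K) = t.toMatrix →
      f A = g A) :
    f = g := by
  suffices h : ∀ M : Matrix n n K, M.det ≠ 0 → ∀ A : GL n K, (A : Matrix n n K) = M → f A = g A
    from MonoidHom.ext fun A => h A (det_ne_zero A) A rfl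
  intro M hM
  refine diagonal_transvection_induction_of_det_ne_zero
    (fun M => ∀ A : GL n K, (A : Matrix n n K) = M → f A = g A) M hM (fun D hD A hA => ?_) htrans
    (fun B C hB hC ihB ihC A hA => ?_)
  · have hD0 : ∀ i, D i ≠ 0 := fun i hi =>
      hD (by rw [det_diagonal]; exact Finset.prod_eq_zero (Finset.mem_univ i) hi)
    obtain rfl : A = diagonalUnits fun i => Units.mk0 (D i) (hD0 i) := Units.ext (by simpa using hA)
    exact DFunLike.congr_fun hdiag _
  · obtain rfl : A = mkOfDetNeZero B hB * mkOfDetNeZero C hC := Units.ext hA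
    rw [map_mul, map_mul, ihB _ rfl, ihC _ rfl]

theorem sign_mulVecPerm_diagonalUnits_mulSingle [Fintype R] [DecidableEq R] (i : n) (u : Rˣ) :
    sign (mulVecPerm (diagonalUnits (Pi.mulSingle i u))) =
      sign (Units.mulLeft u) ^ Fintype.card ({j // j ≠ i} → R) := by
  rw [sign_eq_sign_of_equiv _ (prodCongrLeft fun _ => Units.mulLeft u) (funSplitAt i R),
    sign_prodCongrLeft, Finset.prod_const, Finset.card_univ]
  intro v
  ext j
  · simp [mulVec_diagonal]
  · simp [mulVec_diagonal, Pi.mulSingle_eq_of_ne j.2]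

variable {K : Type*} [Field K] [Fintype K] [DecidableEq K]

theorem sign_mulVecPerm_of_transvection (hK : ringChar K ≠ 2) (t : TransvectionStruct n K)
    (A : GL n K) (hA : (A : Matrix n n K) = t.toMatrix) : sign (mulVecPerm A) = 1 := by
  have hpow : A ^ Fintype.card K = 1 := Units.ext <| by
    rw [Units.val_pow_eq_pow_val, hA, TransvectionStruct.toMatrix, transvection_pow t.hij,
      FiniteField.cast_card_eq_zero, zero_mul, transvection_zero, Units.val_one]
  have hodd : Odd (Fintype.card K) := Nat.odd_iff.mpr (FiniteField.odd_card_of_char_ne_two hK)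
  rw [← Int.units_pow_of_odd (sign (mulVecPerm A)) hodd, ← map_pow, ← map_pow, hpow, map_one, map_one]

theorem sign_mulVecPerm (hK : ringChar K ≠ 2) (A : GL n K) :
    (sign (mulVecPerm A) : ℤ) = quadraticChar K (A : Matrix n n K).det := by
  suffices h : sign.comp mulVecPerm = (quadraticChar K).toUnitHom.comp det by
    simpa using congrArg Units.val (DFunLike.congr_fun h A)
  refine hom_ext_of_diagonalUnits_of_transvection ?_ fun t A hA => ?_
  · refine MonoidHom.functions_ext _ _ _ fun i u => ?_
    have hdet : det (diagonalUnits (Pi.mulSingle i u)) = u :=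
      Units.ext (by simp [det_diagonal, Pi.mulSingle_apply, apply_ite, Finset.prod_ite_eq'])
    have hodd : Odd (Fintype.card ({j // j ≠ i} → K)) := by
      rw [Fintype.card_fun]
      exact (Nat.odd_iff.mpr (FiniteField.odd_card_of_char_ne_two hK)).pow
    simp only [MonoidHom.comp_apply]
    rw [sign_mulVecPerm_diagonalUnits_mulSingle, Int.units_pow_of_odd _ hodd,
      sign_units_mulLeft, hdet, FiniteField.sign_mulLeft_eq_quadraticChar hK]
  · have hdet : det A = 1 := Units.ext (by rw [val_det_apply, hA, t.det, Units.val_one])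
    simp only [MonoidHom.comp_apply]
    rw [sign_mulVecPerm_of_transvection hK t A hA, hdet, map_one]

end GeneralLinearGroup

end Matrix

theorem sign_mulVec_eq_det_pow_general {k : Type*} [Field k] [Fintype k] [DecidableEq k]
    (hodd : Odd (Fintype.card k)) (r : ℕ)
    (M : Matrix (Fin r) (Fin r) k) (hM : IsUnit M.det)
    (e : Equiv.Perm (Fin r → k)) (he : ∀ v, e v = M.mulVec v) :
    ((Equiv.Perm.sign e : ℤ) : k) = M.det ^ ((Fintype.card k - 1) / 2) := by
  rw [Nat.odd_iff] at hodd
  have hk : ringChar k ≠ 2 := fun h => by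
    have := FiniteField.even_card_iff_char_two.mp h
    omega
  obtain rfl : e = GeneralLinearGroup.mulVecPerm ((isUnit_iff_isUnit_det M).mpr hM).unit :=
    Equiv.ext he
  rw [GeneralLinearGroup.sign_mulVecPerm hk, IsUnit.unit_spec,
    quadraticChar_eq_pow_of_char_ne_two' hk]
  congr 1
  omega

/-- for a finite field `k` of odd cardinality `q`, `r ≥ 1` and an invertible
`r × r` matrix `M` over `k`, the sign of the permutation `v ↦ M · v` of `k^r`, cast into `k`,
equals `(det M) ^ ((q - 1) / 2)`. -/
theorem sign_mulVec_eq_det_pow {k : Type*} [Field k] [Fintype k] [DecidableEq k]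
    (hodd : Odd (Fintype.card k)) (r : ℕ) (hr : 1 ≤ r)
    (M : Matrix (Fin r) (Fin r) k) (hM : IsUnit M.det)
    (e : Equiv.Perm (Fin r → k)) (he : ∀ v, e v = M.mulVec v) :
    ((Equiv.Perm.sign e : ℤ) : k) = M.det ^ ((Fintype.card k - 1) / 2) :=
  sign_mulVec_eq_det_pow_general hodd r M hM e he
end

section
/- Generalised Gauss lemma: Let k be a finite field of cardinality q and let n be a positive divisor of q−1; let μ_n = {x ∈ k : x^n = 1}. Let R ⊆ k \ {0} be a transversal of the μ_n-orbits, i.e. every nonzero y ∈ k can be written uniquely as y = u·x with u ∈ μ_n and x ∈ R. Let a ∈ k be nonzero, and suppose c : R → k and ρ : R → R are functions such that for every x ∈ R one has (c x)^n = 1 and a·x = (c x)·(ρ x). Then ∏_{x ∈ R} c x = a^((q−1)/n). -/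
/-!
Multiplying the relations `a * x = c x * ρ x` over `x ∈ R` gives
`a ^ #R * ∏ x = (∏ c x) * ∏ ρ x`. Two elements of `R` with the same image under `ρ` differ by an
`n`-th root of unity, so `ρ` permutes `R` and `∏ c x = a ^ #R`. Finally `(u, x) ↦ u * x` is a
bijection `μ_n × R ≃ kˣ` and `#μ_n = n` because `kˣ` is cyclic of order `q - 1`, whence
`#R = (q - 1) / n`.
-/

open Finset Polynomial

theorem prod_eq_pow_card_of_mul_eq_mul_of_bijOn {M : Type*} [CommMonoidWithZero M]
    [IsCancelMulZero M] [Nontrivial M] {R : Finset M} (hR0 : (0 : M) ∉ R) {a : M} {c ρ : M → M} (hρ : Set.BijOn ρ R R)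
    (h : ∀ x ∈ R, a * x = c x * ρ x) :
    ∏ x ∈ R, c x = a ^ #R := by
  have hprod_ρ : ∏ x ∈ R, ρ x = ∏ x ∈ R, x :=
    prod_nbij ρ hρ.mapsTo hρ.injOn hρ.surjOn fun _ _ => rfl
  have hprod_ne : ∏ x ∈ R, x ≠ 0 := prod_ne_zero_iff.mpr fun x hx h0 => hR0 (h0 ▸ hx)
  refine mul_right_cancel₀ hprod_ne ?_
  calc (∏ x ∈ R, c x) * ∏ x ∈ R, x = ∏ x ∈ R, c x * ρ x := by rw [prod_mul_distrib, hprod_ρ]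
    _ = ∏ x ∈ R, a * x := (prod_congr rfl h).symm
    _ = a ^ #R * ∏ x ∈ R, x := by rw [prod_mul_distrib, prod_const]

namespace FiniteField

variable {k : Type*} [Field k] [Fintype k] {n : ℕ}

theorem exists_isPrimitiveRoot_of_dvd_card_sub_one (hdvd : n ∣ Fintype.card k - 1) :
    ∃ ζ : k, IsPrimitiveRoot ζ n := by
  classical
  obtain ⟨g, hg⟩ := IsCyclic.exists_ofOrder_eq_natCard (α := kˣ)
  rw [Nat.card_eq_fintype_card, Fintype.card_units] at hg
  have hg_prim : IsPrimitiveRoot (g : k) (Fintype.card k - 1) := by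
    simpa only [orderOf_units, hg] using IsPrimitiveRoot.orderOf (g : k)
  obtain ⟨m, hm⟩ := hdvd
  exact ⟨(g : k) ^ m, hg_prim.pow (by have := Fintype.one_lt_card (α := k); omega)
    (hm.trans (mul_comm n m))⟩

theorem card_nthRootsFinset_one (hdvd : n ∣ Fintype.card k - 1) :
    #(nthRootsFinset n (1 : k)) = n :=
  (exists_isPrimitiveRoot_of_dvd_card_sub_one hdvd).choose_spec.card_nthRootsFinset

end FiniteField

section Transversal

variable {k : Type*} [Field k] {n : ℕ} {R : Finset k}

theorem eq_of_eq_mul_of_pow_eq_one_of_transversal (hR0 : (0 : k) ∉ R)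
    (htrans : ∀ y : k, y ≠ 0 → ∃! p : k × k, p.1 ^ n = 1 ∧ p.2 ∈ R ∧ y = p.1 * p.2)
    {x x' u : k} (hx : x ∈ R) (hx' : x' ∈ R) (hu : u ^ n = 1) (h : x = u * x') : x = x' := by
  obtain ⟨_, _, huniq⟩ := htrans x fun h0 => hR0 (h0 ▸ hx)
  exact congrArg Prod.snd <|
    (huniq (1, x) ⟨one_pow n, hx, (one_mul x).symm⟩).trans (huniq (u, x') ⟨hu, hx', h⟩).symm

theorem injOn_of_mul_eq_mul_of_transversal (hn : 0 < n) (hR0 : (0 : k) ∉ R)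
    (htrans : ∀ y : k, y ≠ 0 → ∃! p : k × k, p.1 ^ n = 1 ∧ p.2 ∈ R ∧ y = p.1 * p.2)
    {a : k} (ha : a ≠ 0) {c ρ : k → k} (hc : ∀ x ∈ R, c x ^ n = 1)
    (h : ∀ x ∈ R, a * x = c x * ρ x) : Set.InjOn ρ R := by
  intro x hx x' hx' hρ
  have hc0 : c x' ≠ 0 := ne_zero_pow hn.ne' (by simp [hc x' hx'])
  refine eq_of_eq_mul_of_pow_eq_one_of_transversal hR0 htrans hx hx'
    (u := c x / c x') (by rw [div_pow, hc x hx, hc x' hx', div_one]) ?_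
  refine mul_left_cancel₀ ha ?_
  rw [h x hx, mul_left_comm, h x' hx', ← hρ]
  field_simp

theorem card_nthRootsFinset_mul_card_eq_of_transversal [Fintype k] (hn : 0 < n)
    (hR0 : (0 : k) ∉ R)
    (htrans : ∀ y : k, y ≠ 0 → ∃! p : k × k, p.1 ^ n = 1 ∧ p.2 ∈ R ∧ y = p.1 * p.2) :
    #(nthRootsFinset n (1 : k)) * #R = Fintype.card k - 1 := by
  classical
  rw [← card_product, ← card_univ, ← card_erase_of_mem (mem_univ (0 : k))]
  have hmem {p : k × k} : p ∈ nthRootsFinset n (1 : k) ×ˢ R ↔ p.1 ^ n = 1 ∧ p.2 ∈ R := by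
    rw [mem_product, mem_nthRootsFinset hn]
  have hmaps : ∀ p ∈ nthRootsFinset n (1 : k) ×ˢ R, p.1 * p.2 ∈ univ.erase 0 := by
    intro p hp
    obtain ⟨hp1, hp2⟩ := hmem.mp hp
    exact mem_erase.mpr ⟨mul_ne_zero (ne_zero_pow hn.ne' (by simp [hp1]))
      fun h0 => hR0 (h0 ▸ hp2), mem_univ _⟩
  refine card_bij (fun p _ => p.1 * p.2) hmaps ?_ ?_
  · intro p hp p' hp' hpp'
    obtain ⟨_, _, huniq⟩ := htrans _ (ne_of_mem_erase (hmaps p hp))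
    obtain ⟨hp1, hp2⟩ := hmem.mp hp
    obtain ⟨hp1', hp2'⟩ := hmem.mp hp'
    exact (huniq p ⟨hp1, hp2, rfl⟩).trans (huniq p' ⟨hp1', hp2', hpp'⟩).symm
  · intro y hy
    obtain ⟨p, ⟨hp1, hp2, hy⟩, -⟩ := htrans y (ne_of_mem_erase hy)
    exact ⟨p, hmem.mpr ⟨hp1, hp2⟩, hy.symm⟩

end Transversal

theorem gauss_lemma_general_general {k : Type*} [Field k] [Fintype k]
    (n : ℕ) (hn : 0 < n) (hdvd : n ∣ Fintype.card k - 1)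
    (R : Finset k) (hR0 : (0 : k) ∉ R)
    (htrans : ∀ y : k, y ≠ 0 → ∃! p : k × k, p.1 ^ n = 1 ∧ p.2 ∈ R ∧ y = p.1 * p.2)
    (a : k) (ha : a ≠ 0) (c : k → k) (ρ : k → k)
    (hcρ : ∀ x ∈ R, (c x) ^ n = 1 ∧ ρ x ∈ R ∧ a * x = c x * ρ x) :
    ∏ x ∈ R, c x = a ^ ((Fintype.card k - 1) / n) := by
  have hc : ∀ x ∈ R, c x ^ n = 1 := fun x hx => (hcρ x hx).1
  have hmul : ∀ x ∈ R, a * x = c x * ρ x := fun x hx => (hcρ x hx).2.2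
  have hbij : Set.BijOn ρ R R :=
    (R.finite_toSet.injOn_iff_bijOn_of_mapsTo fun x hx => (hcρ x hx).2.1).mp
      (injOn_of_mul_eq_mul_of_transversal hn hR0 htrans ha hc hmul)
  have hcard : #R = (Fintype.card k - 1) / n := by
    rw [← card_nthRootsFinset_mul_card_eq_of_transversal hn hR0 htrans,
      FiniteField.card_nthRootsFinset_one hdvd, Nat.mul_div_cancel_left _ hn]
  rw [← hcard]
  exact prod_eq_pow_card_of_mul_eq_mul_of_bijOn hR0 hbij hmul

/-- generalised Gauss lemma: let `k` be a finite field of cardinality `q`,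
`n` a positive divisor of `q - 1`, `R` a transversal of the `μ_n`-orbits in `k \ {0}`
(every nonzero `y` is uniquely `u * x` with `u^n = 1` and `x ∈ R`). If `a ≠ 0` and
`c, ρ` satisfy `(c x)^n = 1` and `a * x = c x * ρ x` with `ρ x ∈ R` for all `x ∈ R`,
then `∏_{x ∈ R} c x = a ^ ((q - 1) / n)`. -/
theorem gauss_lemma_general {k : Type*} [Field k] [Fintype k] [DecidableEq k]
    (n : ℕ) (hn : 0 < n) (hdvd : n ∣ Fintype.card k - 1)
    (R : Finset k) (hR0 : (0 : k) ∉ R)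
    (htrans : ∀ y : k, y ≠ 0 → ∃! p : k × k, p.1 ^ n = 1 ∧ p.2 ∈ R ∧ y = p.1 * p.2)
    (a : k) (ha : a ≠ 0) (c : k → k) (ρ : k → k)
    (hcρ : ∀ x ∈ R, (c x) ^ n = 1 ∧ ρ x ∈ R ∧ a * x = c x * ρ x) :
    ∏ x ∈ R, c x = a ^ ((Fintype.card k - 1) / n) :=
  gauss_lemma_general_general n hn hdvd R hR0 htrans a ha c ρ hcρ
end

section
/- Let k be a finite field of cardinality q, let n be a positive divisor of q−1, let r ≥ 1, and let M be an invertible r × r matrix over k. Let R ⊆ k^r \ {0} be a transversal of the μ_n-orbits for the scalar action of μ_n = {u ∈ k : u^n = 1} on k^r \ {0}, i.e. every nonzero v ∈ k^r can be written uniquely as v = u • x with u ∈ μ_n and x ∈ R. Suppose c : R → k and ρ : R → R are functions such that for every x ∈ R one has (c x)^n = 1 and M·x = (c x) • (ρ x). Then ∏_{x ∈ R} c x = (det M)^((q−1)/n). -/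
/-!
Write `N x = c_N(x) • ρ_N(x)` with `c_N(x) ∈ μ_n` and `ρ_N(x) ∈ R`. As `ρ_B` permutes `R`, the
cocycle identity `c_{AB}(x) = c_B(x) c_A(ρ_B x)` makes `N ↦ ∏_{x ∈ R} c_N(x)` multiplicative, so
it suffices to evaluate it on transvections and on `diag(1, …, b, …, 1)`, i.e. on matrices
fixing the hyperplane `x_l = 0` pointwise and multiplying `x_l` by some `b`. For those only the `x ∈ R` with `x_l ≠ 0` contribute, and multiplying the `l`-th coordinates of
`N x = c_N(x) • ρ_N(x)` over them gives `b ^ |S|`. Counting `μ_n`-orbits,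
`n |S| = (q - 1) q ^ (r - 1)`, and `b ^ q = b` in `k`.
-/

open Matrix Finset Polynomial

namespace GaussLemma

variable {k ι : Type*} [Field k] {n : ℕ}

def IsTransversal (n : ℕ) (R : Finset (ι → k)) : Prop :=
  ∀ v : ι → k, v ≠ 0 → ∃! p : k × (ι → k), p.1 ^ n = 1 ∧ p.2 ∈ R ∧ v = p.1 • p.2

noncomputable def decompose (n : ℕ) (R : Finset (ι → k)) (v : ι → k) : k × (ι → k) :=
  Classical.epsilon fun p ↦ p.1 ^ n = 1 ∧ p.2 ∈ R ∧ v = p.1 • p.2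

noncomputable def gaussProd [Fintype ι] (n : ℕ) (R : Finset (ι → k)) (N : Matrix ι ι k) : k :=
  ∏ x ∈ R, (decompose n R (N *ᵥ x)).1

theorem pos_of_dvd_card_sub_one [Fintype k] (hdvd : n ∣ Fintype.card k - 1) : 0 < n :=
  Nat.pos_of_dvd_of_pos hdvd (Nat.sub_pos_of_lt Fintype.one_lt_card)

theorem card_nthRootsFinset_one_of_dvd [Fintype k] [DecidableEq k]
    (hdvd : n ∣ Fintype.card k - 1) : #(nthRootsFinset n (1 : k)) = n := by
  obtain ⟨g, hg⟩ := IsCyclic.exists_ofOrder_eq_natCard (α := kˣ)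
  rw [Nat.card_eq_fintype_card, Fintype.card_units] at hg
  have hg' : IsPrimitiveRoot (g : k) (Fintype.card k - 1) :=
    IsPrimitiveRoot.coe_units_iff.2 (hg ▸ IsPrimitiveRoot.orderOf g)
  exact (hg'.pow (Nat.sub_pos_of_lt Fintype.one_lt_card)
    (Nat.div_mul_cancel hdvd).symm).card_nthRootsFinset

variable [Fintype ι] [DecidableEq ι]

theorem card_filter_apply_ne_zero [Fintype k] [DecidableEq k] (l : ι) :
    #{v : ι → k | v l ≠ 0} = (Fintype.card k - 1) * Fintype.card k ^ (Fintype.card ι - 1) := by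
  have hpi : ({v : ι → k | v l ≠ 0} : Finset _) =
      Fintype.piFinset fun j ↦ if j = l then univ.erase 0 else univ := by
    ext v
    simp only [mem_filter, mem_univ, true_and, Fintype.mem_piFinset]
    refine ⟨fun h j ↦ ?_, fun h ↦ by simpa using h l⟩
    split_ifs with hj
    · simpa [hj] using h
    · exact mem_univ _
  have hcompl : ∀ j ∈ ({l}ᶜ : Finset ι),
      #(if j = l then univ.erase (0 : k) else univ) = Fintype.card k := fun j hj ↦ by
    simp [show j ≠ l by simpa using hj]
  rw [hpi, Fintype.card_piFinset, Fintype.prod_eq_mul_prod_compl l, prod_congr rfl hcompl,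
    prod_const, card_compl, card_singleton]
  simp

theorem card_filter_transversal [Fintype k] [DecidableEq k] {R : Finset (ι → k)}
    (htrans : IsTransversal n R) (hdvd : n ∣ Fintype.card k - 1) {p : (ι → k) → Prop}
    [DecidablePred p] (hp0 : ¬ p 0) (hp : ∀ a : k, a ≠ 0 → ∀ v, p (a • v) ↔ p v) :
    n * #{x ∈ R | p x} = #{v | p v} := by
  have hn := pos_of_dvd_card_sub_one hdvd
  have hroot {a : k} (ha : a ∈ nthRootsFinset n (1 : k)) : a ^ n = 1 :=
    (mem_nthRootsFinset hn 1).1 ha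
  have hne_zero {a : k} (ha : a ^ n = 1) : a ≠ 0 := ne_zero_pow hn.ne' (ha ▸ one_ne_zero)
  rw [← card_nthRootsFinset_one_of_dvd hdvd, ← card_product]
  refine card_nbij (fun q ↦ q.1 • q.2) ?_ ?_ ?_
  · rintro ⟨a, x⟩ hq
    simp only [coe_product, Set.mem_prod, mem_coe, mem_filter, mem_univ, true_and] at hq ⊢
    exact (hp a (hne_zero (hroot hq.1)) x).2 hq.2.2
  · rintro ⟨a, x⟩ hq ⟨a', x'⟩ hq' h
    simp only [coe_product, Set.mem_prod, mem_coe, mem_filter] at hq hq'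
    have hne : a • x ≠ 0 := fun h0 ↦ hp0 (h0 ▸ (hp a (hne_zero (hroot hq.1)) x).2 hq.2.2)
    exact (htrans _ hne).unique ⟨hroot hq.1, hq.2.1, rfl⟩ ⟨hroot hq'.1, hq'.2.1, h⟩
  · intro v hv
    simp only [coe_filter, mem_univ, true_and, Set.mem_ofPred_eq] at hv
    obtain ⟨⟨a, y⟩, ⟨ha, hy, rfl⟩, -⟩ := htrans v fun h0 ↦ hp0 (h0 ▸ hv)
    exact ⟨(a, y), by simp [mem_nthRootsFinset hn, ha, hy, (hp a (hne_zero ha) y).1 hv], rfl⟩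

section Transversal

variable {R : Finset (ι → k)} (hR0 : (0 : ι → k) ∉ R) (htrans : IsTransversal n R)
include hR0 htrans

theorem decompose_mulVec_spec {N : Matrix ι ι k} (hN : N.det ≠ 0) {x : ι → k} (hx : x ∈ R) :
    (decompose n R (N *ᵥ x)).1 ^ n = 1 ∧ (decompose n R (N *ᵥ x)).2 ∈ R ∧
      N *ᵥ x = (decompose n R (N *ᵥ x)).1 • (decompose n R (N *ᵥ x)).2 :=
  Classical.epsilon_spec (htrans _ fun h ↦ hR0 (eq_zero_of_mulVec_eq_zero hN h ▸ hx)).exists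

theorem decompose_mulVec_eq {N : Matrix ι ι k} (hN : N.det ≠ 0) {x : ι → k} (hx : x ∈ R)
    {a : k} {y : ι → k} (h : a ^ n = 1 ∧ y ∈ R ∧ N *ᵥ x = a • y) :
    decompose n R (N *ᵥ x) = (a, y) :=
  (htrans _ fun h ↦ hR0 (eq_zero_of_mulVec_eq_zero hN h ▸ hx)).unique
    (decompose_mulVec_spec hR0 htrans hN hx) h

theorem decompose_mulVec_fst_ne_zero {N : Matrix ι ι k} (hN : N.det ≠ 0) {x : ι → k}
    (hx : x ∈ R) : (decompose n R (N *ᵥ x)).1 ≠ 0 := by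
  intro h
  have hNx := (decompose_mulVec_spec hR0 htrans hN hx).2.2
  rw [h, zero_smul] at hNx
  exact hR0 (eq_zero_of_mulVec_eq_zero hN hNx ▸ hx)

theorem injOn_decompose_mulVec_snd {N : Matrix ι ι k} (hN : N.det ≠ 0) :
    Set.InjOn (fun x ↦ (decompose n R (N *ᵥ x)).2) R := by
  intro x hx y hy hxy
  obtain ⟨hux, -, hNx⟩ := decompose_mulVec_spec hR0 htrans hN hx
  obtain ⟨huy, -, hNy⟩ := decompose_mulVec_spec hR0 htrans hN hy
  set u := (decompose n R (N *ᵥ x)).1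
  set w := (decompose n R (N *ᵥ y)).1
  have hw : w ≠ 0 := decompose_mulVec_fst_ne_zero hR0 htrans hN hy
  have hx_eq : x = (u * w⁻¹) • y := by
    apply mulVec_injective_of_det_ne_zero hN
    simp only at hxy
    rw [mulVec_smul, hNx, hNy, hxy, smul_smul, mul_assoc, inv_mul_cancel₀ hw, mul_one]
  have hroot : (u * w⁻¹) ^ n = 1 := by rw [mul_pow, inv_pow, hux, huy, inv_one, one_mul]
  exact congrArg Prod.snd <| (htrans x fun h ↦ hR0 (h ▸ hx)).unique
    (y₁ := (1, x)) (y₂ := (u * w⁻¹, y))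
    ⟨one_pow n, hx, (one_smul k x).symm⟩ ⟨hroot, hy, hx_eq⟩

theorem prod_decompose_mulVec_snd {N : Matrix ι ι k} (hN : N.det ≠ 0) {S : Finset (ι → k)}
    (hSR : S ⊆ R) (hS : ∀ x ∈ S, (decompose n R (N *ᵥ x)).2 ∈ S) (f : (ι → k) → k) :
    ∏ x ∈ S, f (decompose n R (N *ᵥ x)).2 = ∏ x ∈ S, f x := by
  have hinj := (injOn_decompose_mulVec_snd hR0 htrans hN).mono (coe_subset.2 hSR)
  have hbij := (S.finite_toSet.injOn_iff_bijOn_of_mapsTo hS).1 hinj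
  exact prod_nbij _ hS hinj hbij.surjOn fun _ _ ↦ rfl

theorem gaussProd_mul {A B : Matrix ι ι k} (hA : A.det ≠ 0) (hB : B.det ≠ 0) :
    gaussProd n R (A * B) = gaussProd n R A * gaussProd n R B := by
  have hAB : (A * B).det ≠ 0 := by rw [det_mul]; exact mul_ne_zero hA hB
  have hcocycle : ∀ x ∈ R, (decompose n R ((A * B) *ᵥ x)).1 =
      (decompose n R (B *ᵥ x)).1 * (decompose n R (A *ᵥ (decompose n R (B *ᵥ x)).2)).1 := by
    intro x hx
    obtain ⟨hu, hy, hBx⟩ := decompose_mulVec_spec hR0 htrans hB hx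
    set u := (decompose n R (B *ᵥ x)).1
    set y := (decompose n R (B *ᵥ x)).2
    obtain ⟨hu', hz, hAy⟩ := decompose_mulVec_spec hR0 htrans hA hy
    set u' := (decompose n R (A *ᵥ y)).1
    set z := (decompose n R (A *ᵥ y)).2
    have hABx : (A * B) *ᵥ x = (u * u') • z := by
      rw [← mulVec_mulVec, hBx, mulVec_smul, hAy, smul_smul]
    rw [decompose_mulVec_eq hR0 htrans hAB hx ⟨by rw [mul_pow, hu, hu', one_mul], hz, hABx⟩]
  rw [gaussProd, prod_congr rfl hcocycle, prod_mul_distrib, mul_comm,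
    prod_decompose_mulVec_snd hR0 htrans hB Subset.rfl
      (fun x hx ↦ (decompose_mulVec_spec hR0 htrans hB hx).2.1)
      (fun y ↦ (decompose n R (A *ᵥ y)).1)]
  rfl

theorem gaussProd_one : gaussProd n R (1 : Matrix ι ι k) = 1 :=
  prod_eq_one fun x hx ↦ congrArg Prod.fst <| decompose_mulVec_eq hR0 htrans (by simp) hx
    ⟨one_pow n, hx, by rw [one_mulVec, one_smul]⟩

section Hyperplane

variable {N : Matrix ι ι k} (hN : N.det ≠ 0) {l : ι} {b : k}
  (hb : ∀ v, (N *ᵥ v) l = b * v l) (hfix : ∀ v, v l = 0 → N *ᵥ v = v)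
include hN hb hfix

theorem gaussProd_eq_pow_card_of_fixes_hyperplane [DecidableEq k] :
    gaussProd n R N = b ^ #{x ∈ R | x l ≠ 0} := by
  set u := fun x ↦ (decompose n R (N *ᵥ x)).1
  set ρ := fun x ↦ (decompose n R (N *ᵥ x)).2
  set S := R.filter fun x ↦ x l ≠ 0
  have hu_one : ∀ x ∈ R, u x ≠ 1 → x l ≠ 0 := fun x hx h hxl ↦ h <| congrArg Prod.fst <|
    decompose_mulVec_eq hR0 htrans hN hx ⟨one_pow n, hx, by rw [hfix x hxl, one_smul]⟩
  have hρS : ∀ x ∈ S, ρ x ∈ S := by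
    intro x hx
    rw [mem_filter] at hx ⊢
    obtain ⟨-, hy, hNx⟩ := decompose_mulVec_spec hR0 htrans hN hx.1
    refine ⟨hy, fun hyl ↦ hx.2 ?_⟩
    have hx_eq : x = u x • ρ x :=
      mulVec_injective_of_det_ne_zero hN (by rw [mulVec_smul, hfix _ hyl, ← hNx])
    rw [hx_eq, Pi.smul_apply, hyl, smul_zero]
  have hS0 : ∏ x ∈ S, x l ≠ 0 := prod_ne_zero_iff.2 fun x hx ↦ (mem_filter.1 hx).2
  rw [gaussProd, ← prod_filter_of_ne hu_one]
  refine mul_right_cancel₀ hS0 ?_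
  calc (∏ x ∈ S, u x) * ∏ x ∈ S, x l = (∏ x ∈ S, u x) * ∏ x ∈ S, ρ x l := by
        rw [prod_decompose_mulVec_snd hR0 htrans hN (filter_subset _ R) hρS (fun y ↦ y l)]
    _ = ∏ x ∈ S, b * x l := by
        rw [← prod_mul_distrib]
        refine prod_congr rfl fun x hx ↦ ?_
        rw [← hb, (decompose_mulVec_spec hR0 htrans hN (mem_filter.1 hx).1).2.2]
        rfl
    _ = b ^ #S * ∏ x ∈ S, x l := by rw [prod_mul_distrib, prod_const]

theorem gaussProd_eq_pow_of_fixes_hyperplane [Fintype k] (hdvd : n ∣ Fintype.card k - 1) :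
    gaussProd n R N = b ^ ((Fintype.card k - 1) / n) := by
  classical
  have hcard := card_filter_transversal htrans hdvd (p := fun v : ι → k ↦ v l ≠ 0)
    (by simp) fun a ha v ↦ by simp [ha]
  rw [card_filter_apply_ne_zero, ← Nat.div_mul_cancel hdvd, mul_comm _ n, mul_assoc] at hcard
  rw [gaussProd_eq_pow_card_of_fixes_hyperplane hR0 htrans hN hb hfix,
    Nat.eq_of_mul_eq_mul_left (pos_of_dvd_card_sub_one hdvd) hcard, pow_mul,
    FiniteField.pow_card_pow]

end Hyperplane

theorem gaussProd_transvection (t : TransvectionStruct ι k) : gaussProd n R t.toMatrix = 1 := by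
  classical
  obtain ⟨i, j, hij, c⟩ := t
  have hmulVec (v : ι → k) : transvection i j c *ᵥ v = v + Pi.single i (c * v j) := by
    ext m
    simp [transvection, add_mulVec, single_mulVec, Function.update_apply, Pi.single_apply]
  rw [TransvectionStruct.toMatrix_mk, ← one_pow #{x ∈ R | x j ≠ 0}]
  refine gaussProd_eq_pow_card_of_fixes_hyperplane hR0 htrans
    (by simp [det_transvection_of_ne i j hij]) (fun v ↦ ?_) fun v hv ↦ ?_
  · rw [hmulVec, Pi.add_apply, Pi.single_eq_of_ne hij.symm, add_zero, one_mul]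
  · rw [hmulVec, hv, mul_zero, Pi.single_zero, add_zero]

theorem gaussProd_diagonal [Fintype k] (hdvd : n ∣ Fintype.card k - 1) {D : ι → k}
    (hD : (diagonal D).det ≠ 0) :
    gaussProd n R (diagonal D) = (diagonal D).det ^ ((Fintype.card k - 1) / n) := by
  have hdet (u : ι → kˣ) : (diagonal fun i ↦ (u i : k)).det ≠ 0 := by
    simp [det_diagonal, prod_ne_zero_iff]
  let f : (ι → kˣ) →* k :=
    { toFun := fun u ↦ gaussProd n R (diagonal fun i ↦ (u i : k))
      map_one' := by simpa using gaussProd_one hR0 htrans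
      map_mul' := fun u w ↦ by
        simpa [diagonal_mul_diagonal] using gaussProd_mul hR0 htrans (hdet u) (hdet w) }
  let g : (ι → kˣ) →* k :=
    { toFun := fun u ↦ (∏ i, (u i : k)) ^ ((Fintype.card k - 1) / n)
      map_one' := by simp
      map_mul' := fun u w ↦ by simp [prod_mul_distrib, mul_pow] }
  have hfg : f = g := MonoidHom.functions_ext _ f g fun i a ↦ by
    show gaussProd n R _ = (∏ j, ((Pi.mulSingle (M := fun _ ↦ kˣ) i a j : kˣ) : k)) ^ _
    have hcoe : (fun j ↦ ((Pi.mulSingle (M := fun _ ↦ kˣ) i a j : kˣ) : k)) =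
        Pi.mulSingle i (a : k) := by
      ext j
      by_cases h : j = i <;> simp [h]
    rw [hcoe, Fintype.prod_pi_mulSingle']
    refine gaussProd_eq_pow_of_fixes_hyperplane hR0 htrans (hcoe ▸ hdet _) (l := i)
      (fun v ↦ ?_) (fun v hv ↦ ?_) hdvd
    · simp [mulVec_diagonal]
    · ext j
      by_cases h : j = i <;> simp [mulVec_diagonal, h, hv]
  have hD0 : ∀ i, D i ≠ 0 := by simpa [det_diagonal, prod_ne_zero_iff] using hD
  simpa [f, g, det_diagonal] using DFunLike.congr_fun hfg fun i ↦ Units.mk0 (D i) (hD0 i)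

theorem gaussProd_eq_det_pow [Fintype k] (hdvd : n ∣ Fintype.card k - 1) {M : Matrix ι ι k}
    (hM : M.det ≠ 0) : gaussProd n R M = M.det ^ ((Fintype.card k - 1) / n) := by
  refine diagonal_transvection_induction_of_det_ne_zero
    (fun N ↦ gaussProd n R N = N.det ^ ((Fintype.card k - 1) / n)) M hM
    (fun D hD ↦ gaussProd_diagonal hR0 htrans hdvd hD) (fun t ↦ ?_)
    fun A B hA hB hPA hPB ↦ ?_
  · rw [gaussProd_transvection hR0 htrans, TransvectionStruct.det, one_pow]
  · rw [gaussProd_mul hR0 htrans hA hB, hPA, hPB, det_mul, mul_pow]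

theorem prod_eq_gaussProd {M : Matrix ι ι k} (hM : M.det ≠ 0) {c : (ι → k) → k}
    {ρ : (ι → k) → ι → k} (hcρ : ∀ x ∈ R, c x ^ n = 1 ∧ ρ x ∈ R ∧ M *ᵥ x = c x • ρ x) :
    ∏ x ∈ R, c x = gaussProd n R M :=
  prod_congr rfl fun x hx ↦
    (congrArg Prod.fst (decompose_mulVec_eq hR0 htrans hM hx (hcρ x hx))).symm

end Transversal

end GaussLemma

theorem gauss_lemma_matrix_general {k : Type*} [Field k] [Fintype k]
    (n : ℕ) (hdvd : n ∣ Fintype.card k - 1)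
    (r : ℕ) (M : Matrix (Fin r) (Fin r) k) (hM : IsUnit M.det)
    (R : Finset (Fin r → k)) (hR0 : (0 : Fin r → k) ∉ R)
    (htrans : ∀ v : Fin r → k, v ≠ 0 →
      ∃! p : k × (Fin r → k), p.1 ^ n = 1 ∧ p.2 ∈ R ∧ v = p.1 • p.2)
    (c : (Fin r → k) → k) (ρ : (Fin r → k) → Fin r → k)
    (hcρ : ∀ x ∈ R, (c x) ^ n = 1 ∧ ρ x ∈ R ∧ M.mulVec x = c x • ρ x) :
    ∏ x ∈ R, c x = M.det ^ ((Fintype.card k - 1) / n) := by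
  rw [GaussLemma.prod_eq_gaussProd hR0 htrans hM.ne_zero hcρ,
    GaussLemma.gaussProd_eq_det_pow hR0 htrans hdvd hM.ne_zero]

/-- let `k` be a finite field of cardinality `q`, `n` a positive divisor of
`q - 1`, `r ≥ 1`, `M` an invertible `r × r` matrix over `k`, and `R` a transversal of the
orbits of the scalar action of `μ_n` on `k^r \ {0}` (every nonzero `v` is uniquely `u • x`
with `u^n = 1`, `x ∈ R`). If `c, ρ` satisfy `(c x)^n = 1`, `ρ x ∈ R` and
`M · x = (c x) • ρ x` for all `x ∈ R`, then `∏_{x ∈ R} c x = (det M) ^ ((q - 1) / n)`. -/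
theorem gauss_lemma_matrix {k : Type*} [Field k] [Fintype k] [DecidableEq k]
    (n : ℕ) (hn : 0 < n) (hdvd : n ∣ Fintype.card k - 1)
    (r : ℕ) (hr : 1 ≤ r) (M : Matrix (Fin r) (Fin r) k) (hM : IsUnit M.det)
    (R : Finset (Fin r → k)) (hR0 : (0 : Fin r → k) ∉ R)
    (htrans : ∀ v : Fin r → k, v ≠ 0 →
      ∃! p : k × (Fin r → k), p.1 ^ n = 1 ∧ p.2 ∈ R ∧ v = p.1 • p.2)
    (c : (Fin r → k) → k) (ρ : (Fin r → k) → Fin r → k)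
    (hcρ : ∀ x ∈ R, (c x) ^ n = 1 ∧ ρ x ∈ R ∧ M.mulVec x = c x • ρ x) :
    ∏ x ∈ R, c x = M.det ^ ((Fintype.card k - 1) / n) :=
  gauss_lemma_matrix_general n hdvd r M hM R hR0 htrans c ρ hcρ
end

section
/- Abelianisation of the wreath product: Let G be a commutative group, let t ≥ 2, and let Γ = (Fin t → G) ⋊ Perm(Fin t) be the semidirect product in which a permutation σ acts on v : Fin t → G by (σ • v) i = v (σ⁻¹ i). Let q : Γ → G × ℤˣ be the group homomorphism sending (v, σ) to (∏_{i} v i, sign σ). Then every group homomorphism φ from Γ to a commutative group A factors through q: there exists a homomorphism ψ : G × ℤˣ → A with φ = ψ ∘ q. -/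
/-- The action of the symmetric group `Perm (Fin t)` on `Fin t → G` by
`(σ • v) i = v (σ⁻¹ i)`, as a homomorphism to the automorphism group. -/
def permAut (G : Type*) [CommGroup G] (t : ℕ) :
    Equiv.Perm (Fin t) →* MulAut (Fin t → G) where
  toFun σ :=
    { toFun := fun v i => v (σ⁻¹ i)
      invFun := fun v i => v (σ i)
      left_inv := fun v => funext fun i => by simp
      right_inv := fun v => funext fun i => by simp
      map_mul' := fun v w => rfl }
  map_one' := by ext v i; simp
  map_mul' σ τ := by ext v i; simp

/-!
A homomorphism `φ` to a commutative group is constant on conjugacy classes. Conjugating by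
permutations moves `Pi.mulSingle i g` to `Pi.mulSingle j g`, so on the normal subgroup
`Fin t → G` the map `φ` only sees `∏ i, v i`; and all transpositions are conjugate, so on
`Perm (Fin t)` it only sees the sign.
-/

open Equiv Equiv.Perm

def Int.unitsLift {M : Type*} [Monoid M] (s : M) (hs : s * s = 1) : ℤˣ →* M where
  toFun u := if u = 1 then 1 else s
  map_one' := if_pos rfl
  map_mul' u v := by
    rcases Int.units_eq_one_or u with rfl | rfl <;>
      rcases Int.units_eq_one_or v with rfl | rfl <;> simp [hs]

theorem Int.unitsLift_neg_one {M : Type*} [Monoid M] (s : M) (hs : s * s = 1) :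
    Int.unitsLift s hs (-1) = s :=
  show (if (-1 : ℤˣ) = 1 then 1 else s) = s from if_neg (by decide)

section Perm

variable {α M : Type*} [DecidableEq α] [CommMonoid M]

theorem MonoidHom.map_swap_eq (φ : Perm α →* M) {x y a b : α} (hxy : x ≠ y) (hab : a ≠ b) :
    φ (swap x y) = φ (swap a b) :=
  isConj_iff_eq.mp (φ.map_isConj (isConj_swap hxy hab))

theorem MonoidHom.exists_eq_comp_sign [Fintype α] (φ : Perm α →* M) :
    ∃ ε : ℤˣ →* M, φ = ε.comp sign := by
  rcases subsingleton_or_nontrivial α with hα | hα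
  · exact ⟨1, MonoidHom.ext fun σ => by simp [Subsingleton.elim σ 1]⟩
  obtain ⟨a, b, hab⟩ := exists_pair_ne α
  have hs : φ (swap a b) * φ (swap a b) = 1 := by rw [← map_mul, swap_mul_self, map_one]
  refine ⟨Int.unitsLift _ hs, MonoidHom.ext fun σ => ?_⟩
  induction σ using swap_induction_on with
  | one => simp
  | swap_mul τ x y hxy ih =>
    rw [MonoidHom.comp_apply] at ih ⊢
    rw [map_mul, map_mul, sign_swap hxy, map_mul, ih, Int.unitsLift_neg_one,
      φ.map_swap_eq hxy hab]

end Perm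

theorem MonoidHom.exists_apply_eq_apply_prod {ι G A : Type*} [Fintype ι] [DecidableEq ι]
    [CommMonoid G] [CommMonoid A] (χ : (ι → G) →* A)
    (h_single : ∀ i j (g : G), χ (Pi.mulSingle i g) = χ (Pi.mulSingle j g)) :
    ∃ f : G →* A, ∀ v, χ v = f (∏ i, v i) := by
  rcases isEmpty_or_nonempty ι with hι | ⟨⟨i₀⟩⟩
  · exact ⟨1, fun v => by simp [Subsingleton.elim v 1]⟩
  refine ⟨χ.comp (MonoidHom.mulSingle (fun _ => G) i₀), fun v => ?_⟩
  calc χ v = χ (∏ i, Pi.mulSingle i (v i)) := by rw [Finset.univ_prod_mulSingle]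
    _ = ∏ i, χ (Pi.mulSingle i₀ (v i)) := by simp only [map_prod, h_single _ i₀]
    _ = (χ.comp (MonoidHom.mulSingle (fun _ => G) i₀)) (∏ i, v i) :=
      (map_prod (χ.comp (MonoidHom.mulSingle (fun _ => G) i₀)) v _).symm

theorem SemidirectProduct.map_inl_aut {N G A : Type*} [Group N] [Group G] [CommMonoid A]
    {φ : G →* MulAut N} (f : N ⋊[φ] G →* A) (g : G) (n : N) :
    f (inl (φ g n)) = f (inl n) := by
  rw [inl_aut, map_mul, map_mul, mul_right_comm, ← map_mul, ← map_mul inr, mul_inv_cancel,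
    map_one, map_one, one_mul]

theorem permAut_mulSingle {G : Type*} [CommGroup G] {t : ℕ} (σ : Perm (Fin t)) (j : Fin t)
    (g : G) : permAut G t σ (Pi.mulSingle j g) = (Pi.mulSingle (σ j) g : Fin t → G) := by
  funext x
  change (Pi.mulSingle j g : Fin t → G) (σ⁻¹ x) = _
  simp only [Pi.mulSingle_apply, Perm.inv_eq_iff_eq]

theorem wreath_abelianization_general {G : Type*} [CommGroup G] (t : ℕ)
    (q : SemidirectProduct (Fin t → G) (Equiv.Perm (Fin t)) (permAut G t) →* G × ℤˣ)
    (hq : ∀ (v : Fin t → G) (σ : Equiv.Perm (Fin t)),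
      q ⟨v, σ⟩ = (∏ i, v i, Equiv.Perm.sign σ))
    {A : Type*} [CommGroup A]
    (φ : SemidirectProduct (Fin t → G) (Equiv.Perm (Fin t)) (permAut G t) →* A) :
    ∃ ψ : G × ℤˣ →* A, φ = ψ.comp q := by
  obtain ⟨f, hf⟩ := (φ.comp SemidirectProduct.inl).exists_apply_eq_apply_prod fun i j g => by
    simpa [permAut_mulSingle] using
      (SemidirectProduct.map_inl_aut φ (swap i j) (Pi.mulSingle i g)).symm
  obtain ⟨ε, hε⟩ := (φ.comp SemidirectProduct.inr).exists_eq_comp_sign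
  refine ⟨f.coprod ε, MonoidHom.ext fun ⟨v, σ⟩ => ?_⟩
  calc φ ⟨v, σ⟩ = φ (SemidirectProduct.inl v) * φ (SemidirectProduct.inr σ) := by
        rw [← map_mul, SemidirectProduct.inl_left_mul_inr_right ⟨v, σ⟩]
    _ = f (∏ i, v i) * ε (sign σ) := by
        rw [← MonoidHom.comp_apply φ, hf, ← MonoidHom.comp_apply φ, hε, MonoidHom.comp_apply]
    _ = (f.coprod ε).comp q ⟨v, σ⟩ := by rw [MonoidHom.comp_apply, hq, MonoidHom.coprod_apply]

/-- abelianisation of the wreath product: let `G` be a commutative group,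
`t ≥ 2`, and `Γ = (Fin t → G) ⋊ Perm (Fin t)` with `σ` acting by `(σ • v) i = v (σ⁻¹ i)`.
Let `q : Γ →* G × ℤˣ` send `(v, σ)` to `(∏ i, v i, sign σ)`. Then every homomorphism `φ`
from `Γ` to a commutative group `A` factors as `φ = ψ ∘ q` for some `ψ : G × ℤˣ →* A`. -/
theorem wreath_abelianization {G : Type*} [CommGroup G] (t : ℕ) (ht : 2 ≤ t)
    (q : SemidirectProduct (Fin t → G) (Equiv.Perm (Fin t)) (permAut G t) →* G × ℤˣ)
    (hq : ∀ (v : Fin t → G) (σ : Equiv.Perm (Fin t)),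
      q ⟨v, σ⟩ = (∏ i, v i, Equiv.Perm.sign σ))
    {A : Type*} [CommGroup A]
    (φ : SemidirectProduct (Fin t → G) (Equiv.Perm (Fin t)) (permAut G t) →* A) :
    ∃ ψ : G × ℤˣ →* A, φ = ψ.comp q :=
  wreath_abelianization_general t q hq φ
end

section
/- Independence of the determinant of a μ-set automorphism from the choice of representatives: Let G be a finite commutative group acting freely on a finite set S, and let f : S → S be a G-equivariant bijection. Suppose R and R' are two transversals of the G-orbits in S (subsets containing exactly one element of each orbit), and suppose c : R → G, ρ : R → R, c' : R' → G, ρ' : R' → R' are functions such that for every x ∈ R, f x = (c x) • (ρ x), and for every x ∈ R', f x = (c' x) • (ρ' x). Then ∏_{x ∈ R} c x = ∏_{x ∈ R'} c' x. -/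
/-!
Write `y = a y • t y` for the decomposition of `y` along the transversal `R'`. Comparing the
`R'`-coefficient of `f x` computed through `f x = c x • ρ x` and through `f x = a x • f (t x)`
gives `c x * a (ρ x) = a x * c' (t x)` for `x ∈ R`. Multiply over `R`: since `ρ` permutes `R`
and `t` maps `R` bijectively onto `R'`, the factors `a` cancel in the commutative group `G`.
-/

open Finset

namespace MulAction

def IsOrbitTransversal (G : Type*) {S : Type*} [Group G] [MulAction G S] (R : Set S) : Prop :=
  ∀ y : S, ∃! p : G × S, p.2 ∈ R ∧ y = p.1 • p.2

namespace IsOrbitTransversal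

section Group

variable {G S : Type*} [Group G] [MulAction G S] {R R' : Set S}

noncomputable def coeff (hR : IsOrbitTransversal G R) (y : S) : G := (hR y).exists.choose.1

noncomputable def rep (hR : IsOrbitTransversal G R) (y : S) : S := (hR y).exists.choose.2

variable (hR : IsOrbitTransversal G R) (hR' : IsOrbitTransversal G R')

theorem rep_mem (y : S) : hR.rep y ∈ R := (hR y).exists.choose_spec.1

theorem coeff_smul_rep (y : S) : hR.coeff y • hR.rep y = y := (hR y).exists.choose_spec.2.symm

theorem coeff_rep_eq_of_eq_smul {y r : S} {g : G} (hr : r ∈ R) (hy : y = g • r) :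
    (hR.coeff y, hR.rep y) = (g, r) :=
  (hR y).unique ⟨hR.rep_mem y, (hR.coeff_smul_rep y).symm⟩ ⟨hr, hy⟩

theorem coeff_eq_of_eq_smul {y r : S} {g : G} (hr : r ∈ R) (hy : y = g • r) :
    hR.coeff y = g :=
  congrArg Prod.fst (hR.coeff_rep_eq_of_eq_smul hr hy)

theorem rep_eq_of_eq_smul {y r : S} {g : G} (hr : r ∈ R) (hy : y = g • r) : hR.rep y = r :=
  congrArg Prod.snd (hR.coeff_rep_eq_of_eq_smul hr hy)

theorem rep_of_mem {r : S} (hr : r ∈ R) : hR.rep r = r :=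
  hR.rep_eq_of_eq_smul hr (one_smul G r).symm

theorem eq_smul_rep (g : G) (y : S) : g • y = (g * hR.coeff y) • hR.rep y := by
  rw [mul_smul, hR.coeff_smul_rep]

theorem coeff_smul (g : G) (y : S) : hR.coeff (g • y) = g * hR.coeff y :=
  hR.coeff_eq_of_eq_smul (hR.rep_mem y) (hR.eq_smul_rep g y)

theorem rep_smul (g : G) (y : S) : hR.rep (g • y) = hR.rep y :=
  hR.rep_eq_of_eq_smul (hR.rep_mem y) (hR.eq_smul_rep g y)

theorem rep_rep (y : S) : hR.rep (hR'.rep y) = hR.rep y := by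
  conv_rhs => rw [← hR'.coeff_smul_rep y, hR.rep_smul]

theorem coeff_eq_mul_coeff_rep (y : S) : hR'.coeff y = hR.coeff y * hR'.coeff (hR.rep y) := by
  conv_lhs => rw [← hR.coeff_smul_rep y, hR'.coeff_smul]

theorem rep_apply_rep {ψ : S → S} (hψ : ∀ (g : G) (x : S), ψ (g • x) = g • ψ x) (y : S) :
    hR.rep (ψ (hR.rep y)) = hR.rep (ψ y) := by
  conv_rhs => rw [← hR.coeff_smul_rep y, hψ, hR.rep_smul]

end Group

section Finset

variable {G S M : Type*} [Group G] [MulAction G S] [CommMonoid M] {R R' : Finset S}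

theorem prod_rep (hR : IsOrbitTransversal G (R : Set S))
    (hR' : IsOrbitTransversal G (R' : Set S)) (φ : S → M) :
    ∏ x ∈ R, φ (hR'.rep x) = ∏ x ∈ R', φ x :=
  prod_nbij' hR'.rep hR.rep (fun x _ => hR'.rep_mem x) (fun x _ => hR.rep_mem x)
    (fun x hx => (hR.rep_rep hR' x).trans (hR.rep_of_mem hx))
    (fun x hx => (hR'.rep_rep hR x).trans (hR'.rep_of_mem hx)) (fun _ _ => rfl)

theorem prod_rep_apply (hR : IsOrbitTransversal G (R : Set S)) (f : S ≃ S)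
    (hf : ∀ (g : G) (x : S), f (g • x) = g • f x) (φ : S → M) :
    ∏ x ∈ R, φ (hR.rep (f x)) = ∏ x ∈ R, φ x := by
  have hf_symm (g : G) (x : S) : f.symm (g • x) = g • f.symm x :=
    f.injective (by rw [hf, Equiv.apply_symm_apply, Equiv.apply_symm_apply])
  refine prod_nbij' (hR.rep ∘ f) (hR.rep ∘ f.symm) (fun x _ => hR.rep_mem _)
    (fun x _ => hR.rep_mem _) (fun x hx => ?_) (fun x hx => ?_) (fun _ _ => rfl)
  · simp only [Function.comp_apply, hR.rep_apply_rep hf_symm, Equiv.symm_apply_apply,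
      hR.rep_of_mem hx]
  · simp only [Function.comp_apply, hR.rep_apply_rep hf, Equiv.apply_symm_apply, hR.rep_of_mem hx]

end Finset

section CommGroup

variable {G S : Type*} [CommGroup G] [MulAction G S]

noncomputable def det {R : Finset S} (hR : IsOrbitTransversal G (R : Set S)) (f : S → S) : G :=
  ∏ x ∈ R, hR.coeff (f x)

theorem det_eq_det {R R' : Finset S} (hR : IsOrbitTransversal G (R : Set S))
    (hR' : IsOrbitTransversal G (R' : Set S)) (f : S ≃ S)
    (hf : ∀ (g : G) (x : S), f (g • x) = g • f x) : hR.det f = hR'.det f := by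
  have coeff_apply_two_ways (x : S) : hR.coeff (f x) * hR'.coeff (hR.rep (f x)) =
      hR'.coeff x * hR'.coeff (f (hR'.rep x)) := by
    rw [← hR.coeff_eq_mul_coeff_rep hR', ← hR'.coeff_smul, ← hf, hR'.coeff_smul_rep]
  refine mul_right_cancel (b := ∏ x ∈ R, hR'.coeff x) ?_
  calc hR.det f * ∏ x ∈ R, hR'.coeff x
      = ∏ x ∈ R, hR.coeff (f x) * hR'.coeff (hR.rep (f x)) := by
        rw [prod_mul_distrib, hR.prod_rep_apply f hf, det]
    _ = ∏ x ∈ R, hR'.coeff x * hR'.coeff (f (hR'.rep x)) :=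
        prod_congr rfl fun x _ => coeff_apply_two_ways x
    _ = hR'.det f * ∏ x ∈ R, hR'.coeff x := by
        rw [prod_mul_distrib, hR.prod_rep hR' (fun y => hR'.coeff (f y)), mul_comm, det]

end CommGroup

end IsOrbitTransversal

end MulAction

theorem det_independent_of_transversal_general {G S : Type*} [CommGroup G]
    [MulAction G S]
    (f : S ≃ S) (hf : ∀ (g : G) (x : S), f (g • x) = g • f x)
    (R R' : Finset S)
    (hR : ∀ y : S, ∃! p : G × S, p.2 ∈ R ∧ y = p.1 • p.2)
    (hR' : ∀ y : S, ∃! p : G × S, p.2 ∈ R' ∧ y = p.1 • p.2)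
    (c : S → G) (ρ : S → S) (hcρ : ∀ x ∈ R, ρ x ∈ R ∧ f x = c x • ρ x)
    (c' : S → G) (ρ' : S → S) (hcρ' : ∀ x ∈ R', ρ' x ∈ R' ∧ f x = c' x • ρ' x) :
    ∏ x ∈ R, c x = ∏ x ∈ R', c' x := by
  have hR : MulAction.IsOrbitTransversal G (R : Set S) := hR
  have hR' : MulAction.IsOrbitTransversal G (R' : Set S) := hR'
  calc ∏ x ∈ R, c x = hR.det f :=
        prod_congr rfl fun x hx => (hR.coeff_eq_of_eq_smul (hcρ x hx).1 (hcρ x hx).2).symm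
    _ = hR'.det f := hR.det_eq_det hR' f hf
    _ = ∏ x ∈ R', c' x :=
        prod_congr rfl fun x hx => hR'.coeff_eq_of_eq_smul (hcρ' x hx).1 (hcρ' x hx).2

/-- let a finite commutative group `G` act freely on a finite set `S`, and let
`f : S ≃ S` be `G`-equivariant. If `R`, `R'` are two transversals of the `G`-orbits and
`c, ρ` (resp. `c', ρ'`) satisfy `f x = (c x) • ρ x` with `ρ x ∈ R` for `x ∈ R`
(resp. the primed version for `R'`), then `∏_{x ∈ R} c x = ∏_{x ∈ R'} c' x`. -/
theorem det_independent_of_transversal {G S : Type*} [CommGroup G] [Fintype G]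
    [Fintype S] [MulAction G S]
    (hfree : ∀ (g : G) (x : S), g • x = x → g = 1)
    (f : S ≃ S) (hf : ∀ (g : G) (x : S), f (g • x) = g • f x)
    (R R' : Finset S)
    (hR : ∀ y : S, ∃! p : G × S, p.2 ∈ R ∧ y = p.1 • p.2)
    (hR' : ∀ y : S, ∃! p : G × S, p.2 ∈ R' ∧ y = p.1 • p.2)
    (c : S → G) (ρ : S → S) (hcρ : ∀ x ∈ R, ρ x ∈ R ∧ f x = c x • ρ x)
    (c' : S → G) (ρ' : S → S) (hcρ' : ∀ x ∈ R', ρ' x ∈ R' ∧ f x = c' x • ρ' x) :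
    ∏ x ∈ R, c x = ∏ x ∈ R', c' x :=
  det_independent_of_transversal_general f hf R R' hR hR' c ρ hcρ c' ρ' hcρ'
end

section
/- Multiplicativity of the determinant of μ-set automorphisms under pointed products: Let G be a finite commutative group acting freely on finite sets S and T. Let P = {(a, b) ∈ Option S × Option T : (a, b) ≠ (none, none)}, with G acting diagonally by g • (a, b) = (Option.map (g • ·) a, Option.map (g • ·) b); this action on P is free. Let f : S → S be a G-equivariant bijection and let f' : P → P be the induced bijection (a, b) ↦ (Option.map f a, b). Then for any transversal R of the G-orbits in P with cocycle c (defined by f' x = (c x) • (ρ x) with ρ x ∈ R) and any transversal R_S of the G-orbits in S with cocycle c_S (defined by f x = (c_S x) • (ρ_S x) with ρ_S x ∈ R_S), one has ∏_{x ∈ R} c x = ∏_{x ∈ R_S} c_S x. -/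
/-- The diagonal action of `G` on `Option S × Option T` (fixing the added points `none`). -/
def optionSMul {G S T : Type*} [Monoid G] [MulAction G S] [MulAction G T]
    (g : G) (p : Option S × Option T) : Option S × Option T :=
  (p.1.map (g • ·), p.2.map (g • ·))

/-- The bijection of `Option S × Option T` induced by a bijection `f : S ≃ S` on the first
factor. -/
def optionFst {S T : Type*} (f : S ≃ S) (p : Option S × Option T) : Option S × Option T :=
  (p.1.map f, p.2)

/-!
The product of the cocycle over a transversal does not depend on the transversal: if `R` and
`R'` are transversals and `x = a x • σ x` with `σ x ∈ R'` for `x ∈ R`, decomposing `f' x`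
along `R'` in two ways gives `c x * a (ρ x) = a x * c' (σ x)`, and the correction terms `a`
cancel because `ρ` permutes `R` while `σ` maps `R` bijectively onto `R'`.

So it suffices to compute with the transversal `(RS × Option T) ∪ ({none} × RT)` of `P`, where
`RT` is a transversal of `T`. On it the cocycle of `f'` is `cS s` at `(some s, b)` and `1` at
`(none, some t)`, so the product is `(∏ cS) ^ (|T| + 1)`; freeness of `T` makes `|G|` divide
`|T|`.
-/

namespace SubMulAction

variable {G X : Type*}

section Group
variable [Group G] [MulAction G X]

def IsTransversal (U : SubMulAction G X) (R : Finset X) : Prop :=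
  (R : Set X) ⊆ U ∧ ∀ x ∈ U, ∃! p : G × X, p.2 ∈ R ∧ x = p.1 • p.2

variable {U : SubMulAction G X} {R : Finset X}

theorem IsTransversal.of_exists_of_unique (hRU : (R : Set X) ⊆ U)
    (hex : ∀ x ∈ U, ∃ g : G, ∃ r ∈ R, x = g • r)
    (huniq : ∀ (g g' : G) (r r' : X), r ∈ R → r' ∈ R → g • r = g' • r' →
      g = g' ∧ r = r') :
    U.IsTransversal R := by
  refine ⟨hRU, fun x hx => existsUnique_of_exists_of_unique ?_ ?_⟩
  · obtain ⟨g, r, hr, rfl⟩ := hex x hx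
    exact ⟨(g, r), hr, rfl⟩
  · rintro ⟨g, r⟩ ⟨g', r'⟩ ⟨hr, rfl⟩ ⟨hr', h⟩
    obtain ⟨rfl, rfl⟩ := huniq g g' r r' hr hr' h
    rfl

theorem IsTransversal.eq_of_smul_eq_smul (hR : U.IsTransversal R) {g g' : G} {r r' : X}
    (hr : r ∈ R) (hr' : r' ∈ R) (h : g • r = g' • r') : g = g' ∧ r = r' := by
  simpa using (hR.2 _ (U.smul_mem g (hR.1 hr))).unique (y₁ := (g, r)) (y₂ := (g', r'))
    ⟨hr, rfl⟩ ⟨hr', h⟩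

theorem IsTransversal.exists_smul_eq (hR : U.IsTransversal R) {x : X} (hx : x ∈ U) :
    ∃ g : G, ∃ r ∈ R, x = g • r :=
  let ⟨⟨g, r⟩, h, _⟩ := hR.2 x hx
  ⟨g, r, h⟩

theorem isTransversal_top_iff :
    (⊤ : SubMulAction G X).IsTransversal R ↔
      ∀ x : X, ∃! p : G × X, p.2 ∈ R ∧ x = p.1 • p.2 :=
  ⟨fun h x => h.2 x trivial, fun h => ⟨fun _ _ => trivial, fun x _ => h x⟩⟩

theorem exists_isTransversal_top [Finite X] (hfree : ∀ (g : G) (x : X), g • x = x → g = 1) :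
    ∃ R : Finset X, (⊤ : SubMulAction G X).IsTransversal R := by
  classical
  have := Fintype.ofFinite X
  refine ⟨Finset.univ.image fun q : MulAction.orbitRel.Quotient G X => q.out,
    IsTransversal.of_exists_of_unique (fun _ _ => trivial) (fun x _ => ?_) ?_⟩
  · obtain ⟨g, hg⟩ : (⟦x⟧ : MulAction.orbitRel.Quotient G X).out ∈ MulAction.orbit G x :=
      Quotient.mk_out (s := MulAction.orbitRel G X) x
    exact ⟨g⁻¹, _, Finset.mem_image_of_mem _ (Finset.mem_univ _),
      by rw [← hg, inv_smul_smul]⟩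
  · simp only [Finset.mem_image, Finset.mem_univ, true_and]
    rintro g g' _ _ ⟨q, rfl⟩ ⟨q', rfl⟩ h
    have hq : q = q' := by
      rw [← q.out_eq, ← q'.out_eq, ← MulAction.orbitRel.Quotient.quotient_smul_eq (g := g),
        h, MulAction.orbitRel.Quotient.quotient_smul_eq]
    subst hq
    refine ⟨?_, rfl⟩
    rw [← inv_mul_eq_one]
    exact hfree _ q.out (by rw [mul_smul, ← h, inv_smul_smul])

end Group

section CommGroup
variable [CommGroup G] [MulAction G X] {U : SubMulAction G X} {R R' : Finset X} {F : X → X}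

theorem IsTransversal.injOn_of_cocycle (hR : U.IsTransversal R) (hF : Function.Injective F)
    (hFG : ∀ (g : G) (x : X), F (g • x) = g • F x) {c : X → G} {ρ : X → X}
    (hc : ∀ x ∈ R, ρ x ∈ R ∧ F x = c x • ρ x) : Set.InjOn ρ R := by
  intro x hx y hy hxy
  have : F x = F ((c x / c y) • y) := by
    rw [hFG, (hc x hx).2, (hc y hy).2, hxy, smul_smul, div_mul_cancel]
  exact (hR.eq_of_smul_eq_smul hx hy ((one_smul G x).trans (hF this))).2

theorem IsTransversal.bijOn_of_smul_eq (hR : U.IsTransversal R) (hR' : U.IsTransversal R')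
    {a : X → G} {σ : X → X} (hσ : ∀ x ∈ R, σ x ∈ R' ∧ x = a x • σ x) :
    Set.BijOn σ R R' := by
  refine ⟨fun x hx => (hσ x hx).1, fun x hx y hy hxy => ?_, fun x' hx' => ?_⟩
  · have hx' := (hσ x hx).2
    have hy' := (hσ y hy).2
    refine (hR.eq_of_smul_eq_smul hx hy (g := a y) (g' := a x) ?_).2
    conv_lhs => rw [hx']
    conv_rhs => rw [hy']
    rw [hxy, smul_comm]
  · obtain ⟨g, r, hr, rfl⟩ := hR.exists_smul_eq (hR'.1 hx')
    obtain ⟨hσr, hr'⟩ := hσ r hr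
    refine ⟨r, hr, (hR'.eq_of_smul_eq_smul hσr hx' (g := g * a r) (g' := 1) ?_).2⟩
    rw [one_smul, mul_smul, ← hr']

theorem IsTransversal.prod_cocycle_eq (hR : U.IsTransversal R) (hR' : U.IsTransversal R')
    (hF : Function.Injective F) (hFG : ∀ (g : G) (x : X), F (g • x) = g • F x)
    {c c' : X → G} {ρ ρ' : X → X} (hc : ∀ x ∈ R, ρ x ∈ R ∧ F x = c x • ρ x)
    (hc' : ∀ x ∈ R', ρ' x ∈ R' ∧ F x = c' x • ρ' x) :
    ∏ x ∈ R, c x = ∏ x ∈ R', c' x := by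
  choose! a σ hσ using fun x (hx : x ∈ U) => hR'.exists_smul_eq hx
  have hρ : Set.BijOn ρ R R := (R.finite_toSet.injOn_iff_bijOn_of_mapsTo
    fun x hx => (hc x hx).1).1 (hR.injOn_of_cocycle hF hFG hc)
  have hσR : Set.BijOn σ R R' := hR.bijOn_of_smul_eq hR' fun x hx => hσ x (hR.1 hx)
  -- `F x` decomposes along `R'` both through `ρ x` and through `σ x`.
  have hcompare : ∀ x ∈ R, c x * a (ρ x) = a x * c' (σ x) := by
    intro x hx
    obtain ⟨hρx, hFx⟩ := hc x hx
    obtain ⟨hσρx, hρx'⟩ := hσ (ρ x) (hR.1 hρx)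
    obtain ⟨hσx, hx'⟩ := hσ x (hR.1 hx)
    obtain ⟨hρ'σx, hFσx⟩ := hc' (σ x) hσx
    refine (hR'.eq_of_smul_eq_smul hσρx hρ'σx ?_).1
    rw [mul_smul, ← hρx', ← hFx, mul_smul, ← hFσx, ← hFG, ← hx']
  have hprod : (∏ x ∈ R, c x) * ∏ x ∈ R, a x = (∏ x ∈ R, a x) * ∏ x ∈ R', c' x :=
    calc (∏ x ∈ R, c x) * ∏ x ∈ R, a x = ∏ x ∈ R, c x * a (ρ x) := by
          rw [Finset.prod_mul_distrib, Finset.prod_nbij ρ hρ.mapsTo hρ.injOn hρ.surjOn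
            fun _ _ => rfl]
      _ = ∏ x ∈ R, a x * c' (σ x) := Finset.prod_congr rfl hcompare
      _ = (∏ x ∈ R, a x) * ∏ x ∈ R', c' x := by
          rw [Finset.prod_mul_distrib, Finset.prod_nbij σ hσR.mapsTo hσR.injOn hσR.surjOn
            fun _ _ => rfl]
  exact mul_right_cancel (hprod.trans (mul_comm _ _))

end CommGroup

end SubMulAction

theorem MulAction.natCard_dvd_natCard_of_free {G X : Type*} [Group G] [MulAction G X]
    (hfree : ∀ (g : G) (x : X), g • x = x → g = 1) : Nat.card G ∣ Nat.card X := by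
  rw [Nat.card_congr (MulAction.selfEquivOrbitsQuotientProd (G := G) (X := X) fun x => ?_),
    Nat.card_prod]
  · exact dvd_mul_left _ _
  · exact (Subgroup.eq_bot_iff_forall _).2 fun g hg => hfree g x hg

def pointedProduct (G S T : Type*) [Monoid G] [MulAction G S] [MulAction G T] :
    SubMulAction G (Option S × Option T) where
  carrier := {p | p ≠ (none, none)}
  smul_mem' g p hp := by obtain ⟨_ | _, _ | _⟩ := p <;> simp_all

@[simp]
theorem mem_pointedProduct {G S T : Type*} [Monoid G] [MulAction G S] [MulAction G T]
    {p : Option S × Option T} : p ∈ pointedProduct G S T ↔ p ≠ (none, none) :=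
  Iff.rfl

def pointedTransversal {S T : Type*} [DecidableEq S] [DecidableEq T] [Fintype T] (RS : Finset S)
    (RT : Finset T) : Finset (Option S × Option T) :=
  (RS ×ˢ Finset.univ).image (fun q => (some q.1, q.2)) ∪ RT.image fun t => (none, some t)

def pointedCocycle {G S T : Type*} [One G] (cS : S → G) : Option S × Option T → G
  | (some s, _) => cS s
  | (none, _) => 1

def pointedRep {G S T : Type*} [Inv G] [SMul G T] (cS : S → G) (ρS : S → S) :
    Option S × Option T → Option S × Option T
  | (some s, b) => (some (ρS s), (cS s)⁻¹ • b)
  | (none, b) => (none, b)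

section Pointed

variable {G S T : Type*}

section Action

variable [Group G] [MulAction G S] [MulAction G T]

theorem optionSMul_eq_smul (g : G) (p : Option S × Option T) : optionSMul g p = g • p := rfl

theorem optionFst_smul {f : S ≃ S} (hf : ∀ (g : G) (x : S), f (g • x) = g • f x) (g : G)
    (p : Option S × Option T) : optionFst f (g • p) = g • optionFst f p := by
  obtain ⟨_ | s, b⟩ := p <;> simp [optionFst, hf]

theorem optionFst_injective (f : S ≃ S) : Function.Injective (optionFst (T := T) f) :=
  (Option.map_injective f.injective).prodMap Function.injective_id

variable [DecidableEq S] [DecidableEq T] [Fintype T] {RS : Finset S} {RT : Finset T}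

@[simp]
theorem some_mem_pointedTransversal {s : S} {b : Option T} :
    (some s, b) ∈ pointedTransversal RS RT ↔ s ∈ RS := by
  simp [pointedTransversal]

@[simp]
theorem none_mem_pointedTransversal {b : Option T} :
    ((none : Option S), b) ∈ pointedTransversal RS RT ↔ ∃ t ∈ RT, b = some t := by
  simp [pointedTransversal, eq_comm]

theorem isTransversal_pointedTransversal (hRS : (⊤ : SubMulAction G S).IsTransversal RS)
    (hRT : (⊤ : SubMulAction G T).IsTransversal RT) :
    (pointedProduct G S T).IsTransversal (pointedTransversal RS RT) := by
  refine .of_exists_of_unique ?_ ?_ ?_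
  · rintro ⟨_ | s, b⟩ hp
    · obtain ⟨t, -, rfl⟩ := none_mem_pointedTransversal.1 hp
      simp
    · simp
  · rintro ⟨_ | s, b⟩ hp
    · obtain ⟨t, rfl⟩ : ∃ t, b = some t :=
        Option.ne_none_iff_exists'.1 (by rintro rfl; exact hp rfl)
      obtain ⟨g, t₀, ht₀, rfl⟩ := hRT.exists_smul_eq (x := t) trivial
      exact ⟨g, (none, some t₀), by simpa using ht₀, rfl⟩
    · obtain ⟨g, s₀, hs₀, rfl⟩ := hRS.exists_smul_eq (x := s) trivial
      exact ⟨g, (some s₀, g⁻¹ • b), by simpa using hs₀, by simp⟩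
  · rintro g g' ⟨_ | s, b⟩ ⟨_ | s', b'⟩ hr hr' h <;>
      simp only [Prod.smul_mk, Prod.mk.injEq, Option.smul_none, Option.smul_some, reduceCtorEq,
        false_and, Option.some_inj, true_and] at h ⊢
    · obtain ⟨t, ht, rfl⟩ := none_mem_pointedTransversal.1 hr
      obtain ⟨t', ht', rfl⟩ := none_mem_pointedTransversal.1 hr'
      obtain ⟨rfl, rfl⟩ := hRT.eq_of_smul_eq_smul ht ht' (by simpa using h)
      simp
    · obtain ⟨rfl, rfl⟩ := hRS.eq_of_smul_eq_smul (some_mem_pointedTransversal.1 hr)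
        (some_mem_pointedTransversal.1 hr') h.1
      simpa using h.2

theorem pointedTransversal_cocycle {f : S ≃ S} {cS : S → G} {ρS : S → S}
    (hcρS : ∀ x ∈ RS, ρS x ∈ RS ∧ f x = cS x • ρS x) :
    ∀ x ∈ pointedTransversal RS RT, pointedRep cS ρS x ∈ pointedTransversal RS RT ∧
      optionFst f x = pointedCocycle cS x • pointedRep cS ρS x := by
  rintro ⟨_ | s, b⟩ hx
  · simpa [pointedRep, pointedCocycle, optionFst] using hx
  · obtain ⟨hρs, hfs⟩ := hcρS s (some_mem_pointedTransversal.1 hx)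
    simp [pointedRep, pointedCocycle, optionFst, hρs, hfs]

end Action

theorem prod_pointedCocycle [CommMonoid G] [DecidableEq S] [DecidableEq T] [Fintype T]
    (RS : Finset S) (RT : Finset T) (cS : S → G) :
    ∏ x ∈ pointedTransversal RS RT, pointedCocycle cS x =
      (∏ s ∈ RS, cS s) ^ (Nat.card T + 1) := by
  rw [pointedTransversal, Finset.prod_union, Finset.prod_image, Finset.prod_image,
    Finset.prod_product]
  · simp [pointedCocycle, Finset.prod_pow]
  · exact fun _ _ _ _ h => by simpa using h
  · exact fun _ _ _ _ h => by simpa [Prod.ext_iff] using h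
  · simp only [Finset.disjoint_left, Finset.mem_image]
    rintro _ ⟨_, -, rfl⟩ ⟨_, -, h⟩
    cases h

end Pointed

theorem det_pointed_product_general {G S T : Type*} [CommGroup G]
    [Fintype T] [MulAction G S] [MulAction G T]
    (hfreeT : ∀ (g : G) (x : T), g • x = x → g = 1)
    (f : S ≃ S) (hf : ∀ (g : G) (x : S), f (g • x) = g • f x)
    (R : Finset (Option S × Option T))
    (hRbase : ((none : Option S), (none : Option T)) ∉ R)
    (hR : ∀ p : Option S × Option T, p ≠ (none, none) →
      ∃! gp : G × (Option S × Option T), gp.2 ∈ R ∧ p = optionSMul gp.1 gp.2)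
    (c : Option S × Option T → G) (ρ : Option S × Option T → Option S × Option T)
    (hcρ : ∀ x ∈ R, ρ x ∈ R ∧ optionFst f x = optionSMul (c x) (ρ x))
    (RS : Finset S)
    (hRS : ∀ y : S, ∃! p : G × S, p.2 ∈ RS ∧ y = p.1 • p.2)
    (cS : S → G) (ρS : S → S) (hcρS : ∀ x ∈ RS, ρS x ∈ RS ∧ f x = cS x • ρS x) :
    ∏ x ∈ R, c x = ∏ x ∈ RS, cS x := by
  classical
  simp only [optionSMul_eq_smul] at hR hcρ
  obtain ⟨RT, hRT⟩ := SubMulAction.exists_isTransversal_top hfreeT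
  have hRP : (pointedProduct G S T).IsTransversal R := ⟨fun x hx h => hRbase (h ▸ hx), hR⟩
  obtain ⟨k, hk⟩ := MulAction.natCard_dvd_natCard_of_free hfreeT
  rw [hRP.prod_cocycle_eq
    (isTransversal_pointedTransversal (SubMulAction.isTransversal_top_iff.2 hRS) hRT)
    (optionFst_injective f) (optionFst_smul hf) hcρ (pointedTransversal_cocycle hcρS),
    prod_pointedCocycle, pow_succ, hk, pow_mul, pow_card_eq_one', one_pow, one_mul]

/-- multiplicativity of the determinant under pointed products: let a finite
commutative group `G` act freely on finite sets `S` and `T`, let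
`P = (Option S × Option T) \ {(none, none)}` with the diagonal `G`-action, let `f : S ≃ S` be
`G`-equivariant and `f' : P → P` the induced map `(a, b) ↦ (a.map f, b)`. For any transversal
`R` of the `G`-orbits in `P` with cocycle `c` (given by `f' x = (c x) • ρ x`, `ρ x ∈ R`) and
any transversal `R_S` of the `G`-orbits in `S` with cocycle `c_S` (given by
`f x = (c_S x) • ρ_S x`, `ρ_S x ∈ R_S`), one has `∏_{x ∈ R} c x = ∏_{x ∈ R_S} c_S x`. -/
theorem det_pointed_product {G S T : Type*} [CommGroup G] [Fintype G]
    [Fintype S] [Fintype T] [MulAction G S] [MulAction G T]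
    (hfreeS : ∀ (g : G) (x : S), g • x = x → g = 1)
    (hfreeT : ∀ (g : G) (x : T), g • x = x → g = 1)
    (f : S ≃ S) (hf : ∀ (g : G) (x : S), f (g • x) = g • f x)
    (R : Finset (Option S × Option T))
    (hRbase : ((none : Option S), (none : Option T)) ∉ R)
    (hR : ∀ p : Option S × Option T, p ≠ (none, none) →
      ∃! gp : G × (Option S × Option T), gp.2 ∈ R ∧ p = optionSMul gp.1 gp.2)
    (c : Option S × Option T → G) (ρ : Option S × Option T → Option S × Option T)
    (hcρ : ∀ x ∈ R, ρ x ∈ R ∧ optionFst f x = optionSMul (c x) (ρ x))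
    (RS : Finset S)
    (hRS : ∀ y : S, ∃! p : G × S, p.2 ∈ RS ∧ y = p.1 • p.2)
    (cS : S → G) (ρS : S → S) (hcρS : ∀ x ∈ RS, ρS x ∈ RS ∧ f x = cS x • ρS x) :
    ∏ x ∈ R, c x = ∏ x ∈ RS, cS x :=
  det_pointed_product_general hfreeT f hf R hRbase hR c ρ hcρ RS hRS cS ρS hcρS
end

section
/- Let X be a finite type, let ι : X → X be a fixed-point-free involution (ι ∘ ι = id and ι x ≠ x for all x), and let f be a permutation of X commuting with ι. Let R ⊆ X be a subset containing exactly one element from each pair {x, ι x} (i.e., for every x ∈ X, exactly one of x ∈ R and ι x ∈ R holds). Then the sign of f equals (−1)^N, where N is the number of x ∈ R with f x ∉ R. -/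
/-!
Choosing `R` splits `X` as `R × Bool`, with `ι` becoming `(r, b) ↦ (r, !b)`. A permutation commuting
with this flip is a shear `(r, b) ↦ (g r, σ r b)`: it permutes the pairs by some `g : Perm R` and acts
on each pair by the identity or by `not`, the latter exactly when `f r ∉ R`. Its sign is therefore
`sign g ^ 2 * ∏ r, sign (σ r) = (-1) ^ #{r ∈ R | f r ∉ R}`.
-/

open Finset

namespace Equiv.Perm

variable {α β : Type*} [DecidableEq α] [Fintype α] [DecidableEq β] [Fintype β]

theorem sign_prodShear (g : Perm α) (σ : α → Perm β) :
    sign (g.prodShear σ) = sign g ^ Fintype.card β * ∏ a, sign (σ a) := by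
  have : g.prodShear σ = prodCongrLeft (fun _ => g) * prodCongrRight σ := rfl
  rw [this, map_mul, sign_prodCongrLeft, sign_prodCongrRight, prod_const, card_univ]

theorem sign_boolNot : sign boolNot = -1 := by decide

theorem sign_eq_neg_one_pow_card_of_apply_not (p : Perm (α × Bool))
    (hp : ∀ a b, p (a, !b) = ((p (a, b)).1, !(p (a, b)).2)) :
    sign p = (-1) ^ #{a | (p (a, true)).2 = false} := by
  have fst_apply : ∀ a b, (p (a, b)).1 = (p (a, true)).1 := by
    rintro a (_ | _)
    · simpa using congrArg Prod.fst (hp a true)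
    · rfl
  have snd_apply : ∀ a b, (p (a, b)).2 = (b == (p (a, true)).2) := by
    rintro a (_ | _)
    · simpa using congrArg Prod.snd (hp a true)
    · simp
  have surj : Function.Surjective fun a => (p (a, true)).1 := fun a' =>
    ⟨(p.symm (a', true)).1, by
      show (p (_, true)).1 = a'
      rw [← fst_apply _ (p.symm (a', true)).2]; simp⟩
  let g : Perm α := ofBijective _ ⟨Finite.injective_iff_surjective.mpr surj, surj⟩
  let σ : α → Perm Bool := fun a => if (p (a, true)).2 then 1 else boolNot
  have hp_eq : p = g.prodShear σ := by
    ext ⟨a, b⟩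
    · exact fst_apply a b
    · rw [snd_apply]
      simp only [prodShear_apply, σ]
      cases b <;> cases (p (a, true)).2 <;> rfl
  calc sign p = sign (g.prodShear σ) := congrArg sign hp_eq
    _ = ∏ a, sign (σ a) := by
      rw [sign_prodShear, Fintype.card_bool, Int.units_sq, one_mul]
    _ = ∏ a, if (p (a, true)).2 = false then -1 else 1 := by
      refine prod_congr rfl fun a _ => ?_
      simp only [σ]
      cases (p (a, true)).2 <;> simp [sign_boolNot]
    _ = (-1) ^ #{a | (p (a, true)).2 = false} := by
      rw [prod_ite, prod_const, prod_const_one, mul_one]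

end Equiv.Perm

namespace Finset

variable {X : Type*} [DecidableEq X] {ι : X → X} {R : Finset X}

def equivProdBoolOfXor (hι : Function.Involutive ι) (hR : ∀ x, Xor (x ∈ R) (ι x ∈ R)) :
    X ≃ R × Bool where
  toFun x := (⟨if x ∈ R then x else ι x, by
    split_ifs with h
    exacts [h, (xor_iff_not_iff'.mp (hR x)).mp h]⟩, decide (x ∈ R))
  invFun p := if p.2 then p.1 else ι p.1
  left_inv x := by by_cases h : x ∈ R <;> simp [h, hι x]
  right_inv := by
    rintro ⟨r, _ | _⟩
    · have : ι r ∉ R := fun h => (xor_iff_iff_not.mp (hR r)).mp r.2 h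
      simp [this, hι r]
    · simp

variable (hι : Function.Involutive ι) (hR : ∀ x, Xor (x ∈ R) (ι x ∈ R))

theorem equivProdBoolOfXor_apply_snd (x : X) :
    (equivProdBoolOfXor hι hR x).2 = decide (x ∈ R) := rfl

theorem equivProdBoolOfXor_symm_apply_true (r : R) :
    (equivProdBoolOfXor hι hR).symm (r, true) = r := rfl

theorem equivProdBoolOfXor_symm_apply_not (r : R) (b : Bool) :
    (equivProdBoolOfXor hι hR).symm (r, !b) = ι ((equivProdBoolOfXor hι hR).symm (r, b)) := by
  cases b
  · exact (hι r).symm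
  · rfl

theorem equivProdBoolOfXor_apply_involution (x : X) :
    equivProdBoolOfXor hι hR (ι x) =
      ((equivProdBoolOfXor hι hR x).1, !(equivProdBoolOfXor hι hR x).2) := by
  have hιx : ι x ∈ R ↔ x ∉ R := (xor_iff_not_iff'.mp (hR x)).symm
  by_cases h : x ∈ R <;> simp [equivProdBoolOfXor, h, hι x, hιx]

end Finset

theorem sign_eq_neg_one_pow_card_general {X : Type*} [Fintype X] [DecidableEq X]
    (ι : X → X) (hinv : ∀ x, ι (ι x) = x)
    (f : Equiv.Perm X) (hcomm : ∀ x, f (ι x) = ι (f x))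
    (R : Finset X) (hR : ∀ x : X, Xor' (x ∈ R) (ι x ∈ R)) :
    Equiv.Perm.sign f = (-1) ^ (R.filter fun x => f x ∉ R).card := by
  have hι : Function.Involutive ι := hinv
  have hxor : ∀ x, Xor (x ∈ R) (ι x ∈ R) := hR
  set e := R.equivProdBoolOfXor hι hxor
  have hp : ∀ r b, e.permCongr f (r, !b) =
      ((e.permCongr f (r, b)).1, !(e.permCongr f (r, b)).2) := by
    intro r b
    rw [Equiv.permCongr_apply, equivProdBoolOfXor_symm_apply_not, hcomm,
      equivProdBoolOfXor_apply_involution, Equiv.permCongr_apply]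
  rw [← Equiv.Perm.sign_permCongr e f, Equiv.Perm.sign_eq_neg_one_pow_card_of_apply_not _ hp]
  simp only [Equiv.permCongr_apply, e, equivProdBoolOfXor_symm_apply_true,
    equivProdBoolOfXor_apply_snd, decide_eq_false_iff_not]
  rw [univ_eq_attach, filter_attach (fun x => f x ∉ R), card_map, card_attach]

/-- let `X` be a finite type, `ι` a fixed-point-free involution of `X`, and `f`
a permutation of `X` commuting with `ι`. If `R` contains exactly one element of each pair
`{x, ι x}`, then `sign f = (-1)^N` where `N` is the number of `x ∈ R` with `f x ∉ R`. -/
theorem sign_eq_neg_one_pow_card {X : Type*} [Fintype X] [DecidableEq X]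
    (ι : X → X) (hinv : ∀ x, ι (ι x) = x) (hfp : ∀ x, ι x ≠ x)
    (f : Equiv.Perm X) (hcomm : ∀ x, f (ι x) = ι (f x))
    (R : Finset X) (hR : ∀ x : X, Xor' (x ∈ R) (ι x ∈ R)) :
    Equiv.Perm.sign f = (-1) ^ (R.filter fun x => f x ∉ R).card :=
  sign_eq_neg_one_pow_card_general ι hinv f hcomm R hR
end

section
/- Let k be a finite field and V a finite-dimensional k-vector space. For each one-dimensional subspace L of V choose a nonzero vector s(L) ∈ L. Let f : V → V be a k-linear automorphism; f maps each one-dimensional subspace L to the one-dimensional subspace f(L). Let c be the function assigning to each one-dimensional subspace L the unique scalar c(L) ∈ k with f(s(L)) = c(L) · s(f(L)). Then the product of c(L) over all one-dimensional subspaces L of V equals det f. -/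
/-!
For a fixed choice of `s`, the cocycle of `g ∘ f` is `W ↦ c_g (f W) * c_f W`, so the product is
multiplicative in `f`, and it suffices to treat generators of `GL(V)`: in a basis, transvections
and diagonal matrices with a single entry `a ≠ 1`. Each of these fixes a hyperplane `ker φ`
pointwise and multiplies `φ` by `a`. Then `c W = 1` on lines inside `ker φ`, while on the other
lines `c W * φ (s (f W)) = a * φ (s W)`; since `f` permutes the lines, the product collapses to
`a ^ N`, where `N` is the number of lines not in `ker φ`. Each of them contains exactly one vector
with `φ v = 1`, so `N = q ^ dim (ker φ)`, and `a ^ N = a` in `𝔽_q`.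
-/

open Module Submodule
open scoped Finset

section

variable {k V : Type*} [Field k] [AddCommGroup V] [Module k V]

theorem Submodule.exists_smul_eq_of_finrank_eq_one {W : Submodule k V} (hW : finrank k W = 1)
    {v w : V} (hv : v ∈ W) (hw : w ∈ W) (hw0 : w ≠ 0) : ∃ a : k, a • w = v :=
  mem_span_singleton.1 (eq_span_singleton_of_mem_of_finrank_eq_one hW hw hw0 ▸ hv)

theorem Submodule.le_ker_of_finrank_eq_one {W : Submodule k V} (hW : finrank k W = 1)
    {w : V} (hw : w ∈ W) (hw0 : w ≠ 0) {φ : V →ₗ[k] k} (hφw : φ w = 0) :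
    W ≤ LinearMap.ker φ := by
  intro v hv
  obtain ⟨a, rfl⟩ := exists_smul_eq_of_finrank_eq_one hW hv hw hw0
  simp [hφw]

def IsLineSection (s : Submodule k V → V) : Prop :=
  ∀ W : Submodule k V, finrank k W = 1 → s W ∈ W ∧ s W ≠ 0

def IsLineCocycle (f : V ≃ₗ[k] V) (s : Submodule k V → V) (c : Submodule k V → k) : Prop :=
  ∀ W : Submodule k V, finrank k W = 1 → f (s W) = c W • s (W.map (f : V →ₗ[k] V))

variable {s : Submodule k V → V}

theorem IsLineSection.exists_isLineCocycle (hs : IsLineSection s) (f : V ≃ₗ[k] V) :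
    ∃ c, IsLineCocycle f s c := by
  have h : ∀ W : Submodule k V, finrank k W = 1 →
      ∃ a : k, a • s (W.map (f : V →ₗ[k] V)) = f (s W) := fun W hW =>
    have hfW := (f.finrank_map_eq W).trans hW
    exists_smul_eq_of_finrank_eq_one hfW (mem_map_of_mem (hs W hW).1) (hs _ hfW).1 (hs _ hfW).2
  choose! c hc using h
  exact ⟨c, fun W hW => (hc W hW).symm⟩

theorem IsLineCocycle.unique {f : V ≃ₗ[k] V} {c c' : Submodule k V → k} (hs : IsLineSection s)
    (hc : IsLineCocycle f s c) (hc' : IsLineCocycle f s c') {W : Submodule k V}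
    (hW : finrank k W = 1) : c W = c' W :=
  smul_left_injective k (hs _ ((f.finrank_map_eq W).trans hW)).2 ((hc W hW).symm.trans (hc' W hW))

theorem IsLineCocycle.trans {f g : V ≃ₗ[k] V} {c d : Submodule k V → k}
    (hc : IsLineCocycle f s c) (hd : IsLineCocycle g s d) :
    IsLineCocycle (f.trans g) s fun W => d (W.map (f : V →ₗ[k] V)) * c W := by
  intro W hW
  rw [LinearEquiv.trans_apply, hc W hW, map_smul, hd _ ((f.finrank_map_eq W).trans hW),
    smul_smul, mul_comm, LinearEquiv.coe_trans, map_comp]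

variable {L : Finset (Submodule k V)}

theorem prod_map_linearEquiv_eq_prod {M : Type*} [CommMonoid M]
    (hL : ∀ W : Submodule k V, W ∈ L ↔ finrank k W = 1) (f : V ≃ₗ[k] V) (u : Submodule k V → M) :
    ∏ W ∈ L, u (W.map (f : V →ₗ[k] V)) = ∏ W ∈ L, u W :=
  Finset.prod_equiv (orderIsoMapComap f).toEquiv
    (fun W => by simp [hL, f.finrank_map_eq]) fun _ _ => rfl

variable (L) in
def LineCocycleProdEqDet (f : V ≃ₗ[k] V) : Prop :=
  ∀ s c, IsLineSection s → IsLineCocycle f s c → ∏ W ∈ L, c W = LinearMap.det (f : V →ₗ[k] V)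

theorem lineCocycleProdEqDet_refl (hL : ∀ W : Submodule k V, W ∈ L ↔ finrank k W = 1) :
    LineCocycleProdEqDet L (LinearEquiv.refl k V) := by
  intro s c hs hc
  have hc₁ : IsLineCocycle (LinearEquiv.refl k V) s fun _ => 1 := fun W _ => by simp
  rw [LinearEquiv.refl_toLinearMap, LinearMap.det_id]
  exact Finset.prod_eq_one fun W hW => hc.unique hs hc₁ ((hL W).1 hW)

theorem LineCocycleProdEqDet.trans (hL : ∀ W : Submodule k V, W ∈ L ↔ finrank k W = 1)
    {f g : V ≃ₗ[k] V} (hf : LineCocycleProdEqDet L f) (hg : LineCocycleProdEqDet L g) :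
    LineCocycleProdEqDet L (f.trans g) := by
  intro s c hs hc
  obtain ⟨cf, hcf⟩ := hs.exists_isLineCocycle f
  obtain ⟨cg, hcg⟩ := hs.exists_isLineCocycle g
  calc ∏ W ∈ L, c W = ∏ W ∈ L, cg (W.map (f : V →ₗ[k] V)) * cf W :=
        Finset.prod_congr rfl fun W hW => hc.unique hs (hcf.trans hcg) ((hL W).1 hW)
    _ = LinearMap.det (f.trans g : V →ₗ[k] V) := by
        rw [Finset.prod_mul_distrib, prod_map_linearEquiv_eq_prod hL, hf s cf hs hcf,
          hg s cg hs hcg, LinearEquiv.coe_trans, LinearMap.det_comp, mul_comm]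

open scoped Classical in
theorem card_filter_not_le_ker [FiniteDimensional k V]
    (hL : ∀ W : Submodule k V, W ∈ L ↔ finrank k W = 1) {φ : V →ₗ[k] k} (hφ : φ ≠ 0) :
    #{W ∈ L | ¬W ≤ LinearMap.ker φ} = Nat.card k ^ finrank k (LinearMap.ker φ) := by
  obtain ⟨v₀, hv₀⟩ := LinearMap.surjective_of_ne_zero hφ 1
  have hφx : ∀ x : LinearMap.ker φ, φ (v₀ + x) = 1 := fun x => by simp [hv₀]
  have hx0 : ∀ x : LinearMap.ker φ, v₀ + x ≠ 0 := fun x h => by simpa [h] using hφx x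
  have hmem : ∀ x : LinearMap.ker φ, k ∙ (v₀ + x) ∈ {W ∈ L | ¬W ≤ LinearMap.ker φ} := by
    refine fun x => Finset.mem_filter.2 ⟨(hL _).2 (finrank_span_singleton (hx0 x)), fun hle => ?_⟩
    simpa [hφx x] using hle (mem_span_singleton_self (v₀ + x))
  rw [← Module.natCard_eq_pow_finrank, ← Nat.card_eq_finsetCard]
  refine (Nat.card_eq_of_bijective (fun x => ⟨_, hmem x⟩) ⟨fun x y hxy => ?_, ?_⟩).symm
  · have hspan : k ∙ (v₀ + (x : V)) = k ∙ (v₀ + y) := congrArg Subtype.val hxy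
    have hyx : v₀ + (y : V) ∈ k ∙ (v₀ + (x : V)) := hspan ▸ mem_span_singleton_self _
    obtain ⟨a, ha⟩ := mem_span_singleton.1 hyx
    have ha1 : a = 1 := by simpa [hv₀] using congrArg φ ha
    simpa [ha1] using ha
  · rintro ⟨W, hW⟩
    obtain ⟨hWL, hWker⟩ := Finset.mem_filter.1 hW
    obtain ⟨w, hw, hφw⟩ := SetLike.not_le_iff_exists.1 hWker
    rw [LinearMap.mem_ker] at hφw
    have hw0 : w ≠ 0 := by rintro rfl; simp at hφw
    refine ⟨⟨(φ w)⁻¹ • w - v₀, by simp [hv₀, inv_mul_cancel₀ hφw]⟩, Subtype.ext ?_⟩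
    change k ∙ (v₀ + ((φ w)⁻¹ • w - v₀)) = W
    rw [add_sub_cancel, span_singleton_smul_eq (inv_ne_zero hφw).isUnit]
    exact (eq_span_singleton_of_mem_of_finrank_eq_one ((hL W).1 hWL) hw hw0).symm

theorem Submodule.map_eq_self_of_forall_apply_eq {f : V ≃ₗ[k] V} {W : Submodule k V}
    (hfix : ∀ v ∈ W, f v = v) : W.map (f : V →ₗ[k] V) = W := by
  ext v
  refine ⟨?_, fun hv => ⟨v, hv, hfix v hv⟩⟩
  rintro ⟨w, hw, rfl⟩
  simpa [hfix w hw] using hw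

theorem prod_eq_of_isLineCocycle_of_fixes_ker [Fintype k] [FiniteDimensional k V]
    (hL : ∀ W : Submodule k V, W ∈ L ↔ finrank k W = 1) {φ : V →ₗ[k] k} (hφ : φ ≠ 0)
    {f : V ≃ₗ[k] V} {a : k} (ha : a ≠ 0) (hfφ : ∀ v, φ (f v) = a * φ v)
    (hfix : ∀ v ∈ LinearMap.ker φ, f v = v) {s : Submodule k V → V} {c : Submodule k V → k}
    (hs : IsLineSection s) (hc : IsLineCocycle f s c) : ∏ W ∈ L, c W = a := by
  classical
  set d : Submodule k V → k := fun W => if W ≤ LinearMap.ker φ then 1 else φ (s W)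
  have hd : ∀ W ∈ L, d W ≠ 0 := by
    intro W hW
    by_cases hWφ : W ≤ LinearMap.ker φ
    · simp [d, hWφ]
    · have hW := (hL W).1 hW
      simpa [d, hWφ] using mt (le_ker_of_finrank_eq_one hW (hs W hW).1 (hs W hW).2) hWφ
  have key : ∀ W ∈ L, c W * d (W.map (f : V →ₗ[k] V)) =
      (if W ≤ LinearMap.ker φ then 1 else a) * d W := by
    intro W hW
    have hW := (hL W).1 hW
    by_cases hWφ : W ≤ LinearMap.ker φ
    · have hfW := map_eq_self_of_forall_apply_eq fun v hv => hfix v (hWφ hv)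
      have hcW : c W = 1 := by
        have h := hc W hW
        rw [hfW, hfix _ (hWφ (hs W hW).1)] at h
        exact smul_left_injective k (hs W hW).2 (by simpa using h.symm)
      simp [hfW, hcW, hWφ]
    · have hfWφ : ¬W.map (f : V →ₗ[k] V) ≤ LinearMap.ker φ := by
        refine fun h => hWφ fun v hv => ?_
        simpa [hfφ, ha] using h (mem_map_of_mem hv)
      have := congrArg φ (hc W hW)
      simp only [hfφ, map_smul, smul_eq_mul] at this
      simp [d, hWφ, hfWφ, this]
  have hprod : (∏ W ∈ L, c W) * ∏ W ∈ L, d W =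
      (∏ W ∈ L, if W ≤ LinearMap.ker φ then 1 else a) * ∏ W ∈ L, d W := by
    calc (∏ W ∈ L, c W) * ∏ W ∈ L, d W
        = ∏ W ∈ L, c W * d (W.map (f : V →ₗ[k] V)) := by
          rw [Finset.prod_mul_distrib, prod_map_linearEquiv_eq_prod hL f d]
      _ = _ := by rw [Finset.prod_congr rfl key, Finset.prod_mul_distrib]
  rw [mul_right_cancel₀ (Finset.prod_ne_zero_iff.2 hd) hprod, Finset.prod_ite,
    Finset.prod_const_one, one_mul, Finset.prod_const, card_filter_not_le_ker hL hφ,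
    Nat.card_eq_fintype_card, FiniteField.pow_card_pow]

theorem Module.Basis.coord_ne_zero {ι : Type*} (b : Basis ι k V) (i : ι) : b.coord i ≠ 0 :=
  fun h => by simpa using LinearMap.congr_fun h (b i)

section Basis

variable {ι : Type*} [Fintype ι] [DecidableEq ι] (b : Basis ι k V)

theorem lineCocycleProdEqDet_of_toMatrix_eq_diagonal_mulSingle [Fintype k]
    [FiniteDimensional k V] (hL : ∀ W : Submodule k V, W ∈ L ↔ finrank k W = 1)
    {i : ι} {a : k} (ha : a ≠ 0) {f : V ≃ₗ[k] V}
    (hf : LinearMap.toMatrix b b f = Matrix.diagonal (Pi.mulSingle i a)) :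
    LineCocycleProdEqDet L f := by
  have hrepr : ∀ v j,
      b.repr ((f : V →ₗ[k] V) v) j = (Pi.mulSingle i a : ι → k) j * b.repr v j := fun v j => by
    rw [← LinearMap.toMatrix_mulVec_repr b b, hf, Matrix.mulVec_diagonal]
  intro s c hs hc
  rw [← LinearMap.det_toMatrix b, hf, Matrix.det_diagonal, Finset.prod_pi_mulSingle',
    if_pos (Finset.mem_univ i)]
  refine prod_eq_of_isLineCocycle_of_fixes_ker hL (b.coord_ne_zero i) ha (fun v => ?_)
    (fun v hv => b.ext_elem fun j => ?_) hs hc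
  · simpa using hrepr v i
  · have hvj := hrepr v j
    rcases eq_or_ne j i with rfl | hji
    · simp_all
    · simpa [Pi.mulSingle_eq_of_ne hji] using hvj

theorem lineCocycleProdEqDet_of_toMatrix_eq_transvection [Fintype k]
    [FiniteDimensional k V] (hL : ∀ W : Submodule k V, W ∈ L ↔ finrank k W = 1)
    {i j : ι} (hij : i ≠ j) (a : k) {f : V ≃ₗ[k] V}
    (hf : LinearMap.toMatrix b b f = Matrix.transvection i j a) :
    LineCocycleProdEqDet L f := by
  have hrepr : ∀ v, ⇑(b.repr ((f : V →ₗ[k] V) v)) =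
      ⇑(b.repr v) + (a * b.repr v j) • Pi.single i 1 := fun v => by
    rw [← LinearMap.toMatrix_mulVec_repr b b, hf, Matrix.transvection, Matrix.add_mulVec,
      Matrix.one_mulVec, Matrix.single_mulVec_eq]
  intro s c hs hc
  rw [← LinearMap.det_toMatrix b, hf, Matrix.det_transvection_of_ne _ _ hij]
  refine prod_eq_of_isLineCocycle_of_fixes_ker hL (b.coord_ne_zero j) one_ne_zero (fun v => ?_)
    (fun v hv => b.ext_elem fun l => ?_) hs hc
  · simpa [hij.symm] using congrFun (hrepr v) j
  · simpa [show b.repr v j = 0 from hv] using congrFun (hrepr v) l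

theorem lineCocycleProdEqDet_of_toMatrix_eq_mul
    (hL : ∀ W : Submodule k V, W ∈ L ↔ finrank k W = 1) {A B : Matrix ι ι k}
    (hA : A.det ≠ 0) (hB : B.det ≠ 0)
    (hPA : ∀ g : V ≃ₗ[k] V, LinearMap.toMatrix b b g = A → LineCocycleProdEqDet L g)
    (hPB : ∀ g : V ≃ₗ[k] V, LinearMap.toMatrix b b g = B → LineCocycleProdEqDet L g)
    {f : V ≃ₗ[k] V} (hf : LinearMap.toMatrix b b f = A * B) : LineCocycleProdEqDet L f := by
  set fA := Matrix.toLinearEquiv b A hA.isUnit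
  set fB := Matrix.toLinearEquiv b B hB.isUnit
  have hfA : LinearMap.toMatrix b b fA = A := LinearMap.toMatrix_toLin b b A
  have hfB : LinearMap.toMatrix b b fB = B := LinearMap.toMatrix_toLin b b B
  have hf' : f = fB.trans fA := by
    refine LinearEquiv.toLinearMap_injective ((LinearMap.toMatrix b b).injective ?_)
    rw [hf, LinearEquiv.coe_trans, LinearMap.toMatrix_comp b b b, hfA, hfB]
  exact hf' ▸ (hPB fB hfB).trans hL (hPA fA hfA)

theorem lineCocycleProdEqDet_of_toMatrix_eq_diagonal [Fintype k] [FiniteDimensional k V]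
    (hL : ∀ W : Submodule k V, W ∈ L ↔ finrank k W = 1) {D : ι → k} (hD : ∀ i, D i ≠ 0)
    {f : V ≃ₗ[k] V} (hf : LinearMap.toMatrix b b f = Matrix.diagonal D) :
    LineCocycleProdEqDet L f := by
  suffices h : (∀ i, D i ≠ 0) ∧ ∀ g : V ≃ₗ[k] V,
      LinearMap.toMatrix b b g = Matrix.diagonal D → LineCocycleProdEqDet L g from h.2 f hf
  have hdet : ∀ D' : ι → k, (∀ i, D' i ≠ 0) → (Matrix.diagonal D').det ≠ 0 := fun D' hD' => by
    rw [Matrix.det_diagonal]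
    exact Finset.prod_ne_zero_iff.2 fun i _ => hD' i
  rw [← Finset.univ_prod_mulSingle D]
  refine Finset.prod_induction _ (fun D' => (∀ i, D' i ≠ 0) ∧ ∀ g : V ≃ₗ[k] V,
      LinearMap.toMatrix b b g = Matrix.diagonal D' → LineCocycleProdEqDet L g) ?_ ?_ ?_
  · rintro D₁ D₂ ⟨hD₁, hP₁⟩ ⟨hD₂, hP₂⟩
    refine ⟨fun i => mul_ne_zero (hD₁ i) (hD₂ i), fun g hg => ?_⟩
    exact lineCocycleProdEqDet_of_toMatrix_eq_mul b hL (hdet D₁ hD₁) (hdet D₂ hD₂) hP₁ hP₂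
      (hg.trans (Matrix.diagonal_mul_diagonal' D₁ D₂).symm)
  · refine ⟨fun _ => one_ne_zero, fun g hg => ?_⟩
    have : g = LinearEquiv.refl k V := by
      refine LinearEquiv.toLinearMap_injective ((LinearMap.toMatrix b b).injective ?_)
      rw [hg, LinearEquiv.refl_toLinearMap, LinearMap.toMatrix_id, Matrix.diagonal_one']
    exact this ▸ lineCocycleProdEqDet_refl hL
  · intro i _
    refine ⟨fun j => ?_, fun g hg =>
      lineCocycleProdEqDet_of_toMatrix_eq_diagonal_mulSingle b hL (hD i) hg⟩
    rcases eq_or_ne j i with rfl | hji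
    · simpa using hD j
    · simp [Pi.mulSingle_eq_of_ne hji]

end Basis

theorem lineCocycleProdEqDet [Fintype k] [FiniteDimensional k V]
    (hL : ∀ W : Submodule k V, W ∈ L ↔ finrank k W = 1) (f : V ≃ₗ[k] V) :
    LineCocycleProdEqDet L f := by
  let b := Module.finBasis k V
  have hdet : (LinearMap.toMatrix b b f).det ≠ 0 := by
    rw [LinearMap.det_toMatrix]
    exact f.isUnit_det'.ne_zero
  refine Matrix.diagonal_transvection_induction_of_det_ne_zero
    (fun M => ∀ g : V ≃ₗ[k] V, LinearMap.toMatrix b b g = M → LineCocycleProdEqDet L g)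
    _ hdet (fun D hD g hg => ?_) (fun t g hg => ?_) (fun A B hA hB hPA hPB g hg => ?_) f rfl
  · rw [Matrix.det_diagonal] at hD
    exact lineCocycleProdEqDet_of_toMatrix_eq_diagonal b hL
      (fun i => Finset.prod_ne_zero_iff.1 hD i (Finset.mem_univ i)) hg
  · exact lineCocycleProdEqDet_of_toMatrix_eq_transvection b hL t.hij t.c hg
  · exact lineCocycleProdEqDet_of_toMatrix_eq_mul b hL hA hB hPA hPB hg

end

/-- let `k` be a finite field and `V` a finite-dimensional `k`-vector space.
Choose a nonzero vector `s L` on each line (one-dimensional subspace) `L` of `V`. Let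
`f : V ≃ₗ[k] V` and let `c L ∈ k` be the unique scalar with `f (s L) = c L • s (f L)`, where
`f L` is the image line. Then the product of `c L` over all lines `L` equals `det f`. -/
theorem prod_line_cocycle_eq_det {k V : Type*} [Field k] [Fintype k]
    [AddCommGroup V] [Module k V] [FiniteDimensional k V]
    (L : Finset (Submodule k V))
    (hL : ∀ W : Submodule k V, W ∈ L ↔ Module.finrank k W = 1)
    (s : Submodule k V → V) (hs : ∀ W ∈ L, s W ∈ W ∧ s W ≠ 0)
    (f : V ≃ₗ[k] V) (c : Submodule k V → k)
    (hc : ∀ W ∈ L, f (s W) = c W • s (W.map (f : V →ₗ[k] V))) :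
    ∏ W ∈ L, c W = LinearMap.det (f : V →ₗ[k] V) :=
  lineCocycleProdEqDet hL f s c (fun W hW => hs W ((hL W).2 hW)) fun W hW => hc W ((hL W).2 hW)
end

section
/- Let p be a prime and k ≥ 1 an integer, and let A be an additive subgroup of ℚ_p^k. Then A is compact and open (as a subset of ℚ_p^k with the product topology) if and only if A is commensurable with the subgroup ℤ_p^k = {f : Fin k → ℚ_p | ‖f i‖ ≤ 1 for all i}. -/
/-- The additive subgroup `ℤ_p^k = {f : Fin k → ℚ_p | ‖f i‖ ≤ 1 for all i}` of `ℚ_p^k`. -/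
noncomputable def padicIntLattice (p : ℕ) [Fact p.Prime] (k : ℕ) : AddSubgroup (Fin k → ℚ_[p]) where
  carrier := {f | ∀ i, ‖f i‖ ≤ 1}
  zero_mem' := fun i => by simp
  add_mem' {f g} hf hg i :=
    le_trans (Padic.nonarchimedean (f i) (g i)) (max_le (hf i) (hg i))
  neg_mem' {f} hf i := by simpa using hf i

/-- Two additive subgroups `A`, `B` are commensurable if `A/(A ∩ B)` and `B/(A ∩ B)` are
both finite. -/
def AddSubgroupCommensurable {G : Type*} [AddGroup G] (A B : AddSubgroup G) : Prop :=
  Finite ((↥A) ⧸ ((A ⊓ B).addSubgroupOf A)) ∧ Finite ((↥B) ⧸ ((A ⊓ B).addSubgroupOf B))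

/-!
Compact open subgroups of a topological group are pairwise commensurable: their intersection is
open in each of them, hence of finite index by compactness. Conversely, let `A` be commensurable
with the compact open subgroup `B = ℤ_p^k` and `n = [B : A ∩ B]`. Then `n • B ⊆ A`, and `n • B` is
open because scaling by the nonzero scalar `n` is a homeomorphism; so `A` is open, hence closed,
`A ∩ B` is compact, and `A` is a finite union of translates of `A ∩ B`.
-/

open scoped Pointwise

section TopologicalAddGroup

variable {G : Type*} [AddGroup G] [TopologicalSpace G] [IsTopologicalAddGroup G]

theorem addSubgroupCommensurable_of_isCompact_of_isOpen {A B : AddSubgroup G}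
    (hAc : IsCompact (A : Set G)) (hAo : IsOpen (A : Set G))
    (hBc : IsCompact (B : Set G)) (hBo : IsOpen (B : Set G)) : AddSubgroupCommensurable A B := by
  have hABo : IsOpen ((A ⊓ B : AddSubgroup G) : Set G) := hAo.inter hBo
  have := isCompact_iff_compactSpace.mp hAc
  have := isCompact_iff_compactSpace.mp hBc
  exact ⟨AddSubgroup.quotient_finite_of_isOpen _ (AddSubgroup.addSubgroupOf_isOpen A _ hABo),
    AddSubgroup.quotient_finite_of_isOpen _ (AddSubgroup.addSubgroupOf_isOpen B _ hABo)⟩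

namespace AddSubgroup

theorem compactSpace_of_finite_quotient (H : AddSubgroup G) [Finite (G ⧸ H)]
    (hH : IsCompact (H : Set G)) : CompactSpace G := by
  rw [← isCompact_univ_iff, QuotientAddGroup.univ_eq_iUnion_vadd H]
  exact isCompact_iUnion fun q => hH.vadd _

theorem isCompact_of_finite_quotient_inf {A B : AddSubgroup G} (hAo : IsOpen (A : Set G))
    (hBc : IsCompact (B : Set G)) [Finite (A ⧸ (A ⊓ B).addSubgroupOf A)] :
    IsCompact (A : Set G) := by
  have hABc : IsCompact ((A ⊓ B : AddSubgroup G) : Set G) :=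
    hBc.inter_left (isClosed_of_isOpen A hAo)
  have hABc' : IsCompact (((A ⊓ B).addSubgroupOf A : AddSubgroup A) : Set A) := by
    rwa [Subtype.isCompact_iff, ← coe_subtype, ← coe_map, addSubgroupOf_map_subtype,
      inf_of_le_left inf_le_left]
  have := compactSpace_of_finite_quotient _ hABc'
  exact isCompact_iff_compactSpace.mpr this

end AddSubgroup

end TopologicalAddGroup

theorem AddSubgroup.isOpen_of_finite_quotient_inf (K : Type*) {G : Type*} [Field K] [CharZero K]
    [AddCommGroup G] [Module K G] [TopologicalSpace G] [ContinuousConstSMul K G]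
    [SeparatelyContinuousAdd G] {A B : AddSubgroup G} (hBo : IsOpen (B : Set G))
    [Finite (B ⧸ (A ⊓ B).addSubgroupOf B)] : IsOpen (A : Set G) := by
  have := finiteIndex_of_finite_quotient (H := (A ⊓ B).addSubgroupOf B)
  set n := ((A ⊓ B).addSubgroupOf B).index
  have hn : (n : K) ≠ 0 := Nat.cast_ne_zero.mpr FiniteIndex.index_ne_zero
  have hsub : (n : K) • (B : Set G) ⊆ A := by
    rintro _ ⟨x, hx, rfl⟩
    have h := ((A ⊓ B).addSubgroupOf B).nsmul_index_mem ⟨x, hx⟩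
    rw [mem_addSubgroupOf, coe_nsmul] at h
    show (n : K) • x ∈ A
    rw [Nat.cast_smul_eq_nsmul]
    exact h.1
  refine isOpen_of_mem_nhds A (g := 0) (Filter.mem_of_superset ?_ hsub)
  exact (hBo.smul₀ hn).mem_nhds ⟨0, B.zero_mem, smul_zero _⟩

section padicIntLattice

variable (p : ℕ) [Fact p.Prime] (k : ℕ)

theorem coe_padicIntLattice :
    (padicIntLattice p k : Set (Fin k → ℚ_[p])) = Set.univ.pi fun _ => Metric.closedBall 0 1 := by
  ext f
  simp [padicIntLattice]

theorem isOpen_padicIntLattice : IsOpen (padicIntLattice p k : Set (Fin k → ℚ_[p])) := by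
  rw [coe_padicIntLattice]
  exact isOpen_set_pi Set.finite_univ fun _ _ => IsUltrametricDist.isOpen_closedBall _ one_ne_zero

theorem isCompact_padicIntLattice : IsCompact (padicIntLattice p k : Set (Fin k → ℚ_[p])) := by
  rw [coe_padicIntLattice]
  exact isCompact_univ_pi fun _ => isCompact_closedBall _ _

end padicIntLattice

theorem compact_open_iff_commensurable_general (p : ℕ) [Fact p.Prime] (k : ℕ)
    (A : AddSubgroup (Fin k → ℚ_[p])) :
    (IsCompact (A : Set (Fin k → ℚ_[p])) ∧ IsOpen (A : Set (Fin k → ℚ_[p]))) ↔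
      AddSubgroupCommensurable A (padicIntLattice p k) := by
  have hLc := isCompact_padicIntLattice p k
  have hLo := isOpen_padicIntLattice p k
  refine ⟨fun ⟨hAc, hAo⟩ => addSubgroupCommensurable_of_isCompact_of_isOpen hAc hAo hLc hLo,
    fun ⟨_, _⟩ => ?_⟩
  have hAo := AddSubgroup.isOpen_of_finite_quotient_inf ℚ_[p] (A := A) hLo
  exact ⟨AddSubgroup.isCompact_of_finite_quotient_inf hAo hLc, hAo⟩

/-- for a prime `p`, `k ≥ 1`, and an additive subgroup `A` of `ℚ_p^k`,
`A` is compact and open iff `A` is commensurable with `ℤ_p^k`. -/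
theorem compact_open_iff_commensurable (p : ℕ) [Fact p.Prime] (k : ℕ) (hk : 1 ≤ k)
    (A : AddSubgroup (Fin k → ℚ_[p])) :
    (IsCompact (A : Set (Fin k → ℚ_[p])) ∧ IsOpen (A : Set (Fin k → ℚ_[p]))) ↔
      AddSubgroupCommensurable A (padicIntLattice p k) :=
  compact_open_iff_commensurable_general p k A
end

section
/- Let p be a prime and k ≥ 1 an integer, and let A be an additive subgroup of ℚ_p^k. Then A is commensurable with the subgroup ℤ_p^k = {f : Fin k → ℚ_p | ‖f i‖ ≤ 1 for all i} if and only if there exists a ℤ_p-submodule M of ℚ_p^k whose underlying additive subgroup is A and which is a free ℤ_p-module of rank k. -/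
/-!
Over the PID `ℤ_p`, a free submodule of `ℚ_p^k` of rank `k` is the same as an `ℤ_p`-lattice
(a finitely generated submodule spanning `ℚ_p^k` over `ℚ_p`), so both directions are statements
about lattices.

If `A` is commensurable with `ℤ_p^k`, some `n ≠ 0` gives `n • A ⊆ ℤ_p^k` and `n • ℤ_p^k ⊆ A`.
Since `ℕ` is dense in `ℤ_p`, every `z : ℤ_p` is `a + n² w` with `a : ℕ`, so
`z • x = a • x + n • w • n • x ∈ A` for `x ∈ A`: thus `A` is a submodule squeezed between two
lattices, hence a lattice. Conversely, two lattices absorb each other (`r • M ⊆ N` for some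
`r ≠ 0`, by clearing denominators of finitely many generators), and `M / r M` is finite because
`ℤ_p / r` is.
-/

open Module Submodule

namespace AddSubgroup

variable {G : Type*} [AddCommGroup G]

theorem exists_nsmul_mem_of_finite_quotient {A C : AddSubgroup G}
    [Finite (A ⧸ C.addSubgroupOf A)] : ∃ n ≠ 0, ∀ x ∈ A, n • x ∈ C :=
  ⟨(C.addSubgroupOf A).index, index_ne_zero_of_finite,
    fun x hx => mem_addSubgroupOf.1 ((C.addSubgroupOf A).nsmul_index_mem ⟨x, hx⟩)⟩

end AddSubgroup

theorem AddSubgroupCommensurable.exists_nsmul_mem {G : Type*} [AddCommGroup G]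
    {A B : AddSubgroup G} (h : AddSubgroupCommensurable A B) :
    ∃ n ≠ 0, (∀ x ∈ A, n • x ∈ B) ∧ ∀ x ∈ B, n • x ∈ A := by
  have := h.1
  have := h.2
  obtain ⟨m, hm, hAB⟩ := AddSubgroup.exists_nsmul_mem_of_finite_quotient (A := A) (C := A ⊓ B)
  obtain ⟨n, hn, hBA⟩ := AddSubgroup.exists_nsmul_mem_of_finite_quotient (A := B) (C := A ⊓ B)
  refine ⟨m * n, mul_ne_zero hm hn, fun x hx => ?_, fun x hx => ?_⟩
  · rw [mul_nsmul]
    exact B.nsmul_mem (hAB x hx).2 n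
  · rw [mul_comm, mul_nsmul]
    exact A.nsmul_mem (hBA x hx).1 m

namespace Submodule

theorem finite_quotient_inf_of_smul_mem {R V : Type*} [CommRing R] [AddCommGroup V]
    [Module R V] (M : Submodule R V) [Module.Finite R M] (B : AddSubgroup V) (r : R)
    [Finite (R ⧸ Ideal.span {r})] (h : ∀ x ∈ M, r • x ∈ B) :
    Finite (M.toAddSubgroup ⧸ (M.toAddSubgroup ⊓ B).addSubgroupOf M.toAddSubgroup) := by
  have : Finite (M ⧸ (Ideal.span {r} • ⊤ : Submodule R M)) :=
    Module.finite_of_finite (R ⧸ Ideal.span {r})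
  have : (Ideal.span {r} • ⊤ : Submodule R M).toAddSubgroup.FiniteIndex :=
    @AddSubgroup.finiteIndex_of_finite_quotient _ _ _ this
  have hle : (Ideal.span {r} • ⊤ : Submodule R M).toAddSubgroup ≤
      (M.toAddSubgroup ⊓ B).addSubgroupOf M.toAddSubgroup := by
    intro x hx
    rw [mem_toAddSubgroup, ideal_span_singleton_smul, mem_smul_pointwise_iff_exists] at hx
    obtain ⟨y, -, rfl⟩ := hx
    exact AddSubgroup.mem_addSubgroupOf.2 ⟨(r • y).2, h y y.2⟩
  have := AddSubgroup.finiteIndex_of_le hle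
  exact AddSubgroup.finite_quotient_of_finiteIndex

variable {R K V : Type*} [CommRing R] [Field K] [Algebra R K] [AddCommGroup V] [Module R V]
  [Module K V] [IsScalarTower R K V]

theorem exists_smul_mem_of_mem_span (S : Submonoid R) [IsLocalization S K] (N : Submodule R V)
    {v : V} (hv : v ∈ span K (N : Set V)) : ∃ s ∈ S, s • v ∈ N := by
  induction hv using span_induction with
  | mem x hx => exact ⟨1, S.one_mem, by rwa [one_smul]⟩
  | zero => exact ⟨1, S.one_mem, by rw [smul_zero]; exact N.zero_mem⟩
  | add x y _ _ hx hy =>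
    obtain ⟨s, hs, hsx⟩ := hx
    obtain ⟨t, ht, hty⟩ := hy
    refine ⟨t * s, S.mul_mem ht hs, ?_⟩
    rw [smul_add, mul_smul, mul_comm, mul_smul]
    exact N.add_mem (N.smul_mem t hsx) (N.smul_mem s hty)
  | smul a x _ hx =>
    obtain ⟨s, hs, hsx⟩ := hx
    obtain ⟨⟨b, d⟩, hbd⟩ := IsLocalization.surj S a
    refine ⟨d * s, S.mul_mem d.2 hs, ?_⟩
    have : ((d : R) * s) • a • x = b • s • x := by
      rw [mul_comm, mul_smul, ← algebraMap_smul K (d : R), smul_smul, mul_comm, hbd,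
        algebraMap_smul, smul_comm]
    rw [this]
    exact N.smul_mem b hsx

theorem FG.exists_smul_mem_of_le_span (S : Submonoid R) [IsLocalization S K]
    {M N : Submodule R V} (hM : M.FG) (hMN : (M : Set V) ⊆ span K (N : Set V)) :
    ∃ s ∈ S, ∀ x ∈ M, s • x ∈ N := by
  revert hMN
  induction M, hM using fg_induction with
  | singleton x =>
    intro hMN
    obtain ⟨s, hs, hsx⟩ := exists_smul_mem_of_mem_span S N (hMN (mem_span_singleton_self x))
    refine ⟨s, hs, fun y hy => ?_⟩
    obtain ⟨c, rfl⟩ := mem_span_singleton.1 hy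
    rw [smul_comm]
    exact N.smul_mem c hsx
  | sup M₁ M₂ _ _ ih₁ ih₂ =>
    intro hMN
    obtain ⟨s, hs, hsM⟩ := ih₁ ((SetLike.coe_subset_coe.2 le_sup_left).trans hMN)
    obtain ⟨t, ht, htM⟩ := ih₂ ((SetLike.coe_subset_coe.2 le_sup_right).trans hMN)
    refine ⟨s * t, S.mul_mem hs ht, fun y hy => ?_⟩
    obtain ⟨y₁, hy₁, y₂, hy₂, rfl⟩ := mem_sup.1 hy
    rw [smul_add, mul_comm, mul_smul, mul_comm, mul_smul]
    exact N.add_mem (N.smul_mem t (hsM y₁ hy₁)) (N.smul_mem s (htM y₂ hy₂))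

namespace IsLattice

theorem exists_smul_mem [IsDomain R] [IsFractionRing R K] (M N : Submodule R V) [IsLattice K M]
    [IsLattice K N] : ∃ r ≠ (0 : R), ∀ x ∈ M, r • x ∈ N := by
  obtain ⟨s, hs, h⟩ := FG.exists_smul_mem_of_le_span (K := K) (nonZeroDivisors R) IsLattice.fg
    (M := M) (N := N) (by rw [IsLattice.span_eq_top]; exact Set.subset_univ _)
  exact ⟨s, nonZeroDivisors.ne_zero hs, h⟩

theorem of_smul_mem [IsNoetherianRing R] {L M : Submodule R V} [IsLattice K L] (r : R)
    (hr : algebraMap R K r ≠ 0) (hLM : ∀ x ∈ L, r • x ∈ M) (hML : ∀ x ∈ M, r • x ∈ L) :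
    IsLattice K M where
  fg := by
    let f : M →ₗ[R] L := (r • LinearMap.id).restrict hML
    have hf : Function.Injective f := fun x y hxy => by
      have : algebraMap R K r • (x : V) = algebraMap R K r • (y : V) := by
        simpa [f, algebraMap_smul] using congrArg Subtype.val hxy
      exact Subtype.ext (smul_right_injective V hr this)
    exact Module.Finite.iff_fg.1 (Module.Finite.of_injective f hf)
  span_eq_top := by
    refine eq_top_iff.2 ((IsLattice.span_eq_top (A := K) (M := L)).symm.le.trans ?_)
    refine span_le.2 fun x hx => ?_
    have : x = (algebraMap R K r)⁻¹ • r • x := by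
      rw [← algebraMap_smul K r x, inv_smul_smul₀ hr]
    rw [this]
    exact smul_mem _ _ (subset_span (hLM x hx))

end IsLattice

theorem isLattice_iff_nonempty_basis [IsDomain R] [IsPrincipalIdealRing R] [IsFractionRing R K]
    {ι : Type*} [Fintype ι] (M : Submodule R (ι → K)) :
    IsLattice K M ↔ Nonempty (Basis ι R M) := by
  constructor
  · intro _
    exact ⟨(finBasisOfFinrankEq R M (IsLattice.finrank_of_pi K M)).reindex
      (Fintype.equivFin ι).symm⟩
  · rintro ⟨b⟩
    have : Module.Finite R M := Module.Finite.of_basis b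
    refine IsLattice.of_rank_le K (Module.Finite.iff_fg.1 this) ?_
    rw [rank_eq_card_basis b, rank_fun']

end Submodule

namespace PadicInt

variable {p : ℕ} [Fact p.Prime]

theorem finite_quotient_span_singleton {r : ℤ_[p]} (hr : r ≠ 0) :
    Finite (ℤ_[p] ⧸ Ideal.span {r}) :=
  IsLocalRing.isOpen_iff_finite_quotient.1 (IsDedekindDomain.isOpen_of_ne_bot (by simpa using hr))

theorem exists_nat_add_mul {n : ℕ} (hn : n ≠ 0) (z : ℤ_[p]) :
    ∃ (a : ℕ) (w : ℤ_[p]), z = a + n * w := by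
  obtain ⟨s, hs⟩ := IsDiscreteValuationRing.associated_pow_irreducible
    (Nat.cast_ne_zero.2 hn : (n : ℤ_[p]) ≠ 0) irreducible_p
  have := appr_spec s z
  rw [← Ideal.span_singleton_eq_span_singleton.2 hs, Ideal.mem_span_singleton'] at this
  obtain ⟨w, hw⟩ := this
  exact ⟨z.appr s, w, by linear_combination -hw⟩

theorem smul_mem_of_nsmul_mem {V : Type*} [AddCommGroup V] [Module ℤ_[p] V]
    {L : Submodule ℤ_[p] V} {A : AddSubgroup V} {n : ℕ} (hn : n ≠ 0)
    (hLA : ∀ x ∈ L, n • x ∈ A) (hAL : ∀ x ∈ A, n • x ∈ L) (z : ℤ_[p]) {x : V} (hx : x ∈ A) :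
    z • x ∈ A := by
  obtain ⟨a, w, rfl⟩ := exists_nat_add_mul (mul_ne_zero hn hn) z
  have : ((a : ℤ_[p]) + ((n * n : ℕ) : ℤ_[p]) * w) • x = a • x + n • w • n • x := by
    rw [add_smul, Nat.cast_smul_eq_nsmul, mul_smul, Nat.cast_smul_eq_nsmul, mul_nsmul,
      smul_comm w n x]
  rw [this]
  exact A.add_mem (A.nsmul_mem hx a) (hLA _ (L.smul_mem w (hAL x hx)))

theorem addSubgroupCommensurable_of_isLattice {V : Type*} [AddCommGroup V] [Module ℚ_[p] V]
    [Module ℤ_[p] V] [IsScalarTower ℤ_[p] ℚ_[p] V] (M N : Submodule ℤ_[p] V)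
    [IsLattice ℚ_[p] M] [IsLattice ℚ_[p] N] :
    AddSubgroupCommensurable M.toAddSubgroup N.toAddSubgroup := by
  obtain ⟨r, hr, hMN⟩ := IsLattice.exists_smul_mem (K := ℚ_[p]) M N
  obtain ⟨s, hs, hNM⟩ := IsLattice.exists_smul_mem (K := ℚ_[p]) N M
  have := finite_quotient_span_singleton hr
  have := finite_quotient_span_singleton hs
  refine ⟨M.finite_quotient_inf_of_smul_mem _ r hMN, ?_⟩
  rw [inf_comm]
  exact N.finite_quotient_inf_of_smul_mem _ s hNM

end PadicInt

section

variable (p : ℕ) [Fact p.Prime] (k : ℕ)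

noncomputable def padicIntLatticeSubmodule : Submodule ℤ_[p] (Fin k → ℚ_[p]) :=
  { padicIntLattice p k with
    smul_mem' := fun z f hf i => by
      change ‖(z : ℚ_[p]) * f i‖ ≤ 1
      rw [norm_mul]
      exact mul_le_one₀ z.norm_le_one (norm_nonneg _) (hf i) }

noncomputable def padicIntLatticeSubmoduleEquiv :
    padicIntLatticeSubmodule p k ≃ₗ[ℤ_[p]] (Fin k → ℤ_[p]) where
  toFun x i := ⟨x.1 i, x.2 i⟩
  invFun y := ⟨fun i => y i, fun i => (y i).2⟩
  left_inv _ := rfl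
  right_inv _ := rfl
  map_add' _ _ := rfl
  map_smul' _ _ := rfl

instance isLattice_padicIntLatticeSubmodule : IsLattice ℚ_[p] (padicIntLatticeSubmodule p k) :=
  (isLattice_iff_nonempty_basis _).2
    ⟨(Pi.basisFun ℤ_[p] (Fin k)).map (padicIntLatticeSubmoduleEquiv p k).symm⟩

end

theorem commensurable_iff_free_rank_k_general (p : ℕ) [Fact p.Prime] (k : ℕ)
    (A : AddSubgroup (Fin k → ℚ_[p])) :
    AddSubgroupCommensurable A (padicIntLattice p k) ↔
      ∃ M : Submodule ℤ_[p] (Fin k → ℚ_[p]),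
        M.toAddSubgroup = A ∧ Nonempty (Module.Basis (Fin k) ℤ_[p] M) := by
  simp_rw [← isLattice_iff_nonempty_basis (K := ℚ_[p])]
  constructor
  · intro h
    obtain ⟨n, hn, hAL, hLA⟩ := h.exists_nsmul_mem
    let M : Submodule ℤ_[p] (Fin k → ℚ_[p]) :=
      { A with
        smul_mem' := fun z _ =>
          PadicInt.smul_mem_of_nsmul_mem (L := padicIntLatticeSubmodule p k) hn hLA hAL z }
    refine ⟨M, rfl, IsLattice.of_smul_mem (L := padicIntLatticeSubmodule p k) (n : ℤ_[p])
      (by simpa using hn) (fun x hx => ?_) (fun x hx => ?_)⟩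
    · rw [Nat.cast_smul_eq_nsmul]; exact hLA x hx
    · rw [Nat.cast_smul_eq_nsmul]; exact hAL x hx
  · rintro ⟨M, rfl, hM⟩
    exact PadicInt.addSubgroupCommensurable_of_isLattice M (padicIntLatticeSubmodule p k)

/-- for a prime `p`, `k ≥ 1`, and an additive subgroup `A` of `ℚ_p^k`,
`A` is commensurable with `ℤ_p^k` iff `A` underlies a `ℤ_p`-submodule of `ℚ_p^k` which is
free of rank `k` over `ℤ_p`. -/
theorem commensurable_iff_free_rank_k (p : ℕ) [Fact p.Prime] (k : ℕ) (hk : 1 ≤ k)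
    (A : AddSubgroup (Fin k → ℚ_[p])) :
    AddSubgroupCommensurable A (padicIntLattice p k) ↔
      ∃ M : Submodule ℤ_[p] (Fin k → ℚ_[p]),
        M.toAddSubgroup = A ∧ Nonempty (Module.Basis (Fin k) ℤ_[p] M) :=
  commensurable_iff_free_rank_k_general p k A
end

section
/- Dimension is additive in exact sequences modulo divisors of q − 1: Let O be a local ring whose residue field is finite of cardinality q, let n and m be positive divisors of q − 1, and let 0 → X → Y → Z → 0 be a short exact sequence of O-modules that are finite as sets (i.e., an injective O-linear map f : X → Y and a surjective O-linear map g : Y → Z with range f = ker g). Then (|X| − 1)/n + (|Z| − 1)/n ≡ (|Y| − 1)/n (mod m), where |·| denotes the (finite) cardinality of the module and the divisions are exact natural-number divisions. -/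
/-!
A finite module `M` over a local ring `O` with residue field `k` of size `q` has `q ^ j`
elements: by Nakayama `𝔪 M ≠ M` when `M ≠ 0`, the quotient `M / 𝔪 M` is a `k`-vector space, and
one inducts on `|M|`. Hence `|X| ≡ |Z| ≡ 1` modulo `q - 1`, and writing `|Y| = |X| |Z|` as
`(|X| - 1) |Z| + (|Z| - 1) + 1` gives `(|Y| - 1)/n = (|X| - 1)/n · |Z| + (|Z| - 1)/n`, where the
factor `|Z|` disappears modulo `m`.
-/

open IsLocalRing

theorem Nat.mul_sub_one_div {a c n : ℕ} (ha : 1 ≤ a) (hn : n ∣ a - 1) :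
    (a * c - 1) / n = (a - 1) / n * c + (c - 1) / n := by
  have hsplit : a * c - 1 = (a - 1) * c + (c - 1) := by
    rcases Nat.eq_zero_or_pos c with rfl | hc
    · simp
    · have : 1 ≤ a * c := Nat.one_le_iff_ne_zero.mpr (by positivity)
      zify [ha, hc, this]
      ring
  rw [hsplit, Nat.add_div_of_dvd_right (hn.mul_right c), Nat.div_mul_right_comm hn]

theorem LinearMap.natCard_eq_mul_of_exact {R X Y Z : Type*} [Ring R]
    [AddCommGroup X] [Module R X] [AddCommGroup Y] [Module R Y] [AddCommGroup Z] [Module R Z]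
    (f : X →ₗ[R] Y) (hf : Function.Injective f) (g : Y →ₗ[R] Z) (hg : Function.Surjective g)
    (hfg : LinearMap.range f = LinearMap.ker g) :
    Nat.card Y = Nat.card X * Nat.card Z := by
  rw [AddSubgroup.card_eq_card_quotient_mul_card_addSubgroup (LinearMap.ker g).toAddSubgroup,
    mul_comm]
  congr 1
  · rw [Nat.card_congr (LinearEquiv.ofInjective f hf).toEquiv, hfg]
    rfl
  · exact Nat.card_congr (g.quotKerEquivOfSurjective hg).toEquiv

theorem IsLocalRing.exists_natCard_quotient_maximalIdeal_smul_eq_pow {O : Type*} [CommRing O]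
    [IsLocalRing O] (M : Type*) [AddCommGroup M] [Module O M] [Finite M] :
    ∃ d, Nat.card (M ⧸ maximalIdeal O • (⊤ : Submodule O M)) = Nat.card (ResidueField O) ^ d := by
  let : Module (ResidueField O) (M ⧸ maximalIdeal O • (⊤ : Submodule O M)) :=
    inferInstanceAs (Module (O ⧸ maximalIdeal O) _)
  have : Finite (M ⧸ maximalIdeal O • (⊤ : Submodule O M)) := Quotient.finite _
  have : Module.Finite (ResidueField O) (M ⧸ maximalIdeal O • (⊤ : Submodule O M)) :=
    Module.Finite.of_finite
  exact ⟨_, Module.natCard_eq_pow_finrank⟩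

theorem IsLocalRing.exists_natCard_eq_pow {O : Type*} [CommRing O] [IsLocalRing O]
    (M : Type*) [AddCommGroup M] [Module O M] [Finite M] :
    ∃ j, Nat.card M = Nat.card (ResidueField O) ^ j := by
  induction hM : Nat.card M using Nat.strong_induction_on generalizing M with
  | _ k ih =>
    subst hM
    rcases subsingleton_or_nontrivial M with hM | hM
    · exact ⟨0, by rw [pow_zero, Nat.card_of_subsingleton (0 : M)]⟩
    have hN : maximalIdeal O • (⊤ : Submodule O M) ≠ ⊤ :=
      (Submodule.top_ne_ideal_smul_of_le_jacobson_annihilator (maximalIdeal_le_jacobson _)).symm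
    obtain ⟨x, -, hx⟩ := SetLike.exists_of_lt hN.lt_top
    obtain ⟨j, hj⟩ := ih _ (Finite.card_subtype_lt hx) _ rfl
    obtain ⟨d, hd⟩ := exists_natCard_quotient_maximalIdeal_smul_eq_pow (O := O) M
    refine ⟨d + j, ?_⟩
    rw [AddSubgroup.card_eq_card_quotient_mul_card_addSubgroup
      (maximalIdeal O • (⊤ : Submodule O M)).toAddSubgroup, pow_add, ← hd, ← hj]
    rfl

theorem IsLocalRing.natCard_residueField_sub_one_dvd {O : Type*} [CommRing O] [IsLocalRing O]
    (M : Type*) [AddCommGroup M] [Module O M] [Finite M] :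
    Nat.card (ResidueField O) - 1 ∣ Nat.card M - 1 := by
  obtain ⟨j, hj⟩ := exists_natCard_eq_pow (O := O) M
  simpa [hj] using Nat.sub_dvd_pow_sub_pow (Nat.card (ResidueField O)) 1 j

theorem dim_additive_in_exact_sequences_general {O : Type*} [CommRing O] [IsLocalRing O]
    [Fintype (IsLocalRing.ResidueField O)] (q : ℕ)
    (hq : Fintype.card (IsLocalRing.ResidueField O) = q)
    (n m : ℕ) (hndvd : n ∣ q - 1) (hmdvd : m ∣ q - 1)
    (X Y Z : Type*) [AddCommGroup X] [Module O X] [Fintype X]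
    [AddCommGroup Y] [Module O Y] [Fintype Y]
    [AddCommGroup Z] [Module O Z] [Fintype Z]
    (f : X →ₗ[O] Y) (hf : Function.Injective f)
    (g : Y →ₗ[O] Z) (hg : Function.Surjective g)
    (hfg : LinearMap.range f = LinearMap.ker g) :
    (Fintype.card X - 1) / n + (Fintype.card Z - 1) / n ≡
      (Fintype.card Y - 1) / n [MOD m] := by
  simp only [← Nat.card_eq_fintype_card] at hq ⊢
  subst hq
  have hX : n ∣ Nat.card X - 1 := hndvd.trans (natCard_residueField_sub_one_dvd X)
  have hZ : Nat.card Z ≡ 1 [MOD m] :=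
    ((Nat.modEq_iff_dvd' Nat.card_pos).mpr (hmdvd.trans (natCard_residueField_sub_one_dvd Z))).symm
  rw [f.natCard_eq_mul_of_exact hf g hg hfg, Nat.mul_sub_one_div Nat.card_pos hX]
  simpa only [mul_one] using ((hZ.mul_left ((Nat.card X - 1) / n)).add_right ((Nat.card Z - 1) / n)).symm

/-- dimension is additive in exact sequences modulo divisors of `q - 1`:
let `O` be a local ring whose residue field is finite of cardinality `q`, let `n`, `m` be
positive divisors of `q - 1`, and let `0 → X → Y → Z → 0` be a short exact sequence of
`O`-modules that are finite as sets (an injective `O`-linear `f : X → Y` and a surjective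
`O`-linear `g : Y → Z` with `range f = ker g`). Then
`(|X| - 1)/n + (|Z| - 1)/n ≡ (|Y| - 1)/n (mod m)`. -/
theorem dim_additive_in_exact_sequences {O : Type*} [CommRing O] [IsLocalRing O]
    [Fintype (IsLocalRing.ResidueField O)] (q : ℕ)
    (hq : Fintype.card (IsLocalRing.ResidueField O) = q)
    (n m : ℕ) (hn : 0 < n) (hndvd : n ∣ q - 1) (hm : 0 < m) (hmdvd : m ∣ q - 1)
    (X Y Z : Type*) [AddCommGroup X] [Module O X] [Fintype X]
    [AddCommGroup Y] [Module O Y] [Fintype Y]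
    [AddCommGroup Z] [Module O Z] [Fintype Z]
    (f : X →ₗ[O] Y) (hf : Function.Injective f)
    (g : Y →ₗ[O] Z) (hg : Function.Surjective g)
    (hfg : LinearMap.range f = LinearMap.ker g) :
    (Fintype.card X - 1) / n + (Fintype.card Z - 1) / n ≡
      (Fintype.card Y - 1) / n [MOD m] :=
  dim_additive_in_exact_sequences_general q hq n m hndvd hmdvd X Y Z f hf g hg hfg
end
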